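/- arXiv:1304.7530 — 3 statements merged into one kernel-verified Lean document; each statement's English description precedes it below -/
import Mathlib

section
/- Let x : V∖𝒯 → ℝ≥0 and z : 𝒮 → ℝ≥0 be a feasible fractional solution of the PCSF linear-programming relaxation, i.e., for every demand i and every S ∈ 𝒮_i, ∑_{v ∈ δ(S)} x(v) + ∑_{R : S ⊆ R, R ∈ 𝒮_i} z(R) ≥ 1. Then there exists X ⊆ V such that pcsf(X) ≤ 2·H_{2h}·( ∑_{v ∈ V∖𝒯} c(v)·x(v) + ∑_{S ∈ 𝒮} π(S)·z(S) ), where H_m = ∑_{j=1}^m 1/j is the m-th harmonic number. -/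
open scoped Classical

def cutδ {V : Type*} (G : SimpleGraph V) (S : Set V) : Set V :=
  {v | v ∉ S ∧ ∃ u ∈ S, G.Adj v u}

def Separates {V : Type*} {h : ℕ} (s t : Fin h → V) (i : Fin h) (S : Set V) : Prop :=
  Xor' (s i ∈ S) (t i ∈ S)

def Satisfies {V : Type*} (G : SimpleGraph V) {h : ℕ} (s t : Fin h → V)
    (X : Set V) (i : Fin h) : Prop :=
  ∃ (hs : s i ∈ X) (ht : t i ∈ X), (G.induce X).Reachable ⟨s i, hs⟩ ⟨t i, ht⟩

noncomputable def pcsf {V : Type*} (G : SimpleGraph V) {h : ℕ} (s t : Fin h → V)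
    (c : V → ℝ) (pen : Fin h → ℝ) (X : Set V) : ℝ :=
  (∑ᶠ v ∈ X, c v) + ∑ᶠ i ∈ {i : Fin h | ¬ Satisfies G s t X i}, pen i

noncomputable def setPenalty {V : Type*} {h : ℕ} (s t : Fin h → V)
    (pen : Fin h → ℝ) (S : Set V) : ℝ :=
  (1 / 2) * ∑ᶠ i ∈ {i : Fin h | Separates s t i S}, pen i

set_option linter.unusedSectionVars false

namespace PCSFAux
open MeasureTheory
open scoped ENNReal

variable {V : Type*} [Fintype V] {G : SimpleGraph V}

noncomputable def wcost (G : SimpleGraph V) (w : V → ℝ≥0∞) {u v : V} (p : G.Walk u v) : ℝ≥0∞ :=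
  ∑ q ∈ p.support.toFinset, w q

lemma wcost_mono (w : V → ℝ≥0∞) {u v u' v' : V} {p : G.Walk u v} {q : G.Walk u' v'}
    (hpq : p.support.toFinset ⊆ q.support.toFinset) : wcost G w p ≤ wcost G w q :=
  Finset.sum_le_sum_of_subset hpq

lemma sum_insert_le' (w : V → ℝ≥0∞) (a : V) (S : Finset V) :
    ∑ q ∈ insert a S, w q ≤ w a + ∑ q ∈ S, w q := by
  by_cases ha : a ∈ S
  · rw [Finset.insert_eq_self.2 ha]; exact le_add_self
  · rw [Finset.sum_insert ha]

noncomputable def dd (G : SimpleGraph V) (w : V → ℝ≥0∞) (A : Set V) (v : V) : ℝ≥0∞ :=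
  sInf {τ | ∃ u ∈ A, ∃ p : G.Walk u v, wcost G w p = τ}

lemma dd_le (w : V → ℝ≥0∞) {A : Set V} {u v : V} (hu : u ∈ A) (p : G.Walk u v) :
    dd G w A v ≤ wcost G w p := sInf_le ⟨u, hu, p, rfl⟩

lemma dd_exists (w : V → ℝ≥0∞) (A : Set V) (v : V) (hv : dd G w A v ≠ ⊤) :
    ∃ u ∈ A, ∃ p : G.Walk u v, wcost G w p = dd G w A v := by
  set S := {τ | ∃ u ∈ A, ∃ p : G.Walk u v, wcost G w p = τ} with hS
  have hfin : S.Finite := by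
    apply Set.Finite.subset
      (Set.Finite.image (fun s : Finset V => ∑ q ∈ s, w q) (Set.finite_univ (α := Finset V)))
    rintro τ ⟨u, hu, p, rfl⟩
    exact ⟨p.support.toFinset, Set.mem_univ _, rfl⟩
  have hne : S.Nonempty := by
    by_contra hne
    rw [Set.not_nonempty_iff_eq_empty] at hne
    apply hv
    rw [dd, ← hS, hne, sInf_empty]
  exact hne.csInf_mem hfin

lemma dd_zero (w : V → ℝ≥0∞) {A : Set V} {v : V} (hv : v ∈ A) (hw : w v = 0) :
    dd G w A v = 0 := by
  refine le_antisymm ?_ zero_le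
  have := dd_le (G := G) w hv (SimpleGraph.Walk.nil (u := v))
  simpa [wcost, hw] using this

lemma dd_le_add_adj (w : V → ℝ≥0∞) (A : Set V) {u v : V} (hadj : G.Adj u v) :
    dd G w A v ≤ dd G w A u + w v := by
  by_cases hu : dd G w A u = ⊤
  · simp [hu]
  · obtain ⟨a, ha, p, hp⟩ := dd_exists w A u hu
    refine le_trans (dd_le w ha (p.concat hadj)) ?_
    rw [← hp]
    have hsupp : (p.concat hadj).support.toFinset = insert v p.support.toFinset := by
      rw [SimpleGraph.Walk.support_concat, List.toFinset_append]
      ext q; simp [or_comm]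
    calc wcost G w (p.concat hadj) = ∑ q ∈ insert v p.support.toFinset, w q := by
          rw [wcost, hsupp]
    _ ≤ w v + ∑ q ∈ p.support.toFinset, w q := sum_insert_le' w v _
    _ = wcost G w p + w v := by rw [add_comm]; rfl

noncomputable def mm (G : SimpleGraph V) (w : V → ℝ≥0∞) (A : Set V) (v : V) : ℝ≥0∞ :=
  sInf ((dd G w A) '' (G.neighborSet v))

lemma mm_le (w : V → ℝ≥0∞) (A : Set V) {v u : V} (hu : G.Adj v u) :
    mm G w A v ≤ dd G w A u := sInf_le ⟨u, hu, rfl⟩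

lemma mm_exists (w : V → ℝ≥0∞) (A : Set V) (v : V) (hv : mm G w A v ≠ ⊤) :
    ∃ u, G.Adj v u ∧ dd G w A u = mm G w A v := by
  have hfin : ((dd G w A) '' (G.neighborSet v)).Finite := (Set.toFinite _).image _
  have hne : ((dd G w A) '' (G.neighborSet v)).Nonempty := by
    by_contra hne
    rw [Set.not_nonempty_iff_eq_empty] at hne
    apply hv; rw [mm, hne, sInf_empty]
  obtain ⟨u, hu, hdu⟩ := hne.csInf_mem hfin
  exact ⟨u, hu, hdu⟩

lemma dd_le_mm_add (w : V → ℝ≥0∞) (A : Set V) (v : V) :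
    dd G w A v ≤ mm G w A v + w v := by
  by_cases hm : mm G w A v = ⊤
  · simp [hm]
  · obtain ⟨u, hu, hdu⟩ := mm_exists w A v hm
    rw [← hdu]
    exact dd_le_add_adj w A hu.symm

lemma mm_le_wcost_rev (w : V → ℝ≥0∞) (A : Set V) {u v : V} (q : G.Walk v u)
    (hu : u ∈ A) (hv : v ∉ A) : mm G w A v ≤ wcost G w q := by
  cases q with
  | nil => exact absurd hu hv
  | @cons _ y _ hadj q' =>
    calc mm G w A v ≤ dd G w A y := mm_le w A hadj
    _ ≤ wcost G w q'.reverse := dd_le w hu q'.reverse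
    _ ≤ wcost G w (SimpleGraph.Walk.cons hadj q') := by
        apply wcost_mono
        intro a ha
        simp only [List.mem_toFinset, SimpleGraph.Walk.support_reverse, List.mem_reverse] at ha
        simp [SimpleGraph.Walk.support_cons, ha]

lemma mm_le_dd (w : V → ℝ≥0∞) (A : Set V) {v : V} (hv : v ∉ A) :
    mm G w A v ≤ dd G w A v := by
  by_cases hd : dd G w A v = ⊤
  · simp [hd]
  · obtain ⟨u, hu, p, hp⟩ := dd_exists w A v hd
    rw [← hp]
    have := mm_le_wcost_rev w A p.reverse hu hv
    refine le_trans this (wcost_mono w ?_)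
    intro a ha
    simpa [SimpleGraph.Walk.support_reverse] using ha

/-- connectivity through walks with support in `X` -/
def Rel (G : SimpleGraph V) (X : Set V) (u v : V) : Prop :=
  ∃ p : G.Walk u v, ∀ q ∈ p.support, q ∈ X

lemma Rel.mem_left {X : Set V} {u v : V} (h : Rel G X u v) : u ∈ X := by
  obtain ⟨p, hp⟩ := h; exact hp u p.start_mem_support

lemma Rel.mem_right {X : Set V} {u v : V} (h : Rel G X u v) : v ∈ X := by
  obtain ⟨p, hp⟩ := h; exact hp v p.end_mem_support

lemma Rel.refl {X : Set V} {v : V} (hv : v ∈ X) : Rel G X v v :=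
  ⟨SimpleGraph.Walk.nil, by simpa using hv⟩

lemma Rel.symm {X : Set V} {u v : V} (h : Rel G X u v) : Rel G X v u := by
  obtain ⟨p, hp⟩ := h
  exact ⟨p.reverse, by intro q hq; apply hp; simpa [SimpleGraph.Walk.support_reverse] using hq⟩

lemma Rel.trans {X : Set V} {u v x : V} (h : Rel G X u v) (h' : Rel G X v x) : Rel G X u x := by
  obtain ⟨p, hp⟩ := h; obtain ⟨q, hq⟩ := h'
  refine ⟨p.append q, ?_⟩
  intro a ha
  rw [SimpleGraph.Walk.mem_support_append_iff] at ha
  rcases ha with ha | ha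
  exacts [hp a ha, hq a ha]

lemma Rel.mono {X Y : Set V} (hXY : X ⊆ Y) {u v : V} (h : Rel G X u v) : Rel G Y u v := by
  obtain ⟨p, hp⟩ := h; exact ⟨p, fun q hq => hXY (hp q hq)⟩

lemma reach_induce_of_walk {X : Set V} : ∀ {u v : V} (p : G.Walk u v),
    (∀ q ∈ p.support, q ∈ X) → ∀ (hu : u ∈ X) (hv : v ∈ X),
    (G.induce X).Reachable ⟨u, hu⟩ ⟨v, hv⟩ := by
  intro u v p
  induction p with
  | nil =>
    intro _ hu hv
    exact SimpleGraph.Reachable.refl _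
  | @cons a b c hadj q ih =>
    intro hp hu hv
    have hb : b ∈ X := hp b (by simp [SimpleGraph.Walk.support_cons])
    have hadj' : (G.induce X).Adj ⟨a, hu⟩ ⟨b, hb⟩ := by simpa using hadj
    refine hadj'.reachable.trans (ih ?_ hb hv)
    intro q hq
    exact hp q (by simp [SimpleGraph.Walk.support_cons, hq])

lemma rel_iff_reach {X : Set V} {u v : V} (hu : u ∈ X) (hv : v ∈ X) :
    Rel G X u v ↔ (G.induce X).Reachable ⟨u, hu⟩ ⟨v, hv⟩ := by
  constructor
  · rintro ⟨p, hp⟩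
    exact reach_induce_of_walk p hp hu hv
  · rintro ⟨p⟩
    refine ⟨p.map ⟨Subtype.val, fun {a b} hab => by simpa using hab⟩, ?_⟩
    intro q hq
    rw [SimpleGraph.Walk.support_map, List.mem_map] at hq
    obtain ⟨⟨a, haX⟩, _, rfl⟩ := hq
    exact haX

lemma satisfies_iff_rel {h : ℕ} {s t : Fin h → V} {X : Set V} {i : Fin h} :
    Satisfies G s t X i ↔ Rel G X (s i) (t i) := by
  constructor
  · rintro ⟨hs, ht, hr⟩
    exact (rel_iff_reach hs ht).2 hr
  · intro hr
    exact ⟨hr.mem_left, hr.mem_right, (rel_iff_reach hr.mem_left hr.mem_right).1 hr⟩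

def cmp (G : SimpleGraph V) (X : Set V) (v : V) : Set V := {u | Rel G X v u}

lemma mem_cmp_self {X : Set V} {v : V} (hv : v ∈ X) : v ∈ cmp G X v := Rel.refl hv

lemma cmp_subset {X : Set V} {v : V} : cmp G X v ⊆ X := fun _ hu => hu.mem_right

lemma cmp_eq_of_rel {X : Set V} {u v : V} (h : Rel G X u v) : cmp G X u = cmp G X v := by
  ext a
  exact ⟨fun ha => h.symm.trans ha, fun ha => h.trans ha⟩

lemma rel_of_cmp_eq {X : Set V} {u v : V} (hv : v ∈ X) (h : cmp G X u = cmp G X v) :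
    Rel G X u v := by
  have : v ∈ cmp G X u := h ▸ mem_cmp_self hv
  exact this


lemma sum_union_le' (f : V → ℝ≥0∞) (s t : Finset V) :
    ∑ q ∈ s ∪ t, f q ≤ ∑ q ∈ s, f q + ∑ q ∈ t, f q := by
  calc ∑ q ∈ s ∪ t, f q = ∑ q ∈ s, f q + ∑ q ∈ t \ s, f q := by
        rw [← Finset.sum_union Finset.disjoint_sdiff, Finset.union_sdiff_self_eq_union]
  _ ≤ _ := add_le_add_right (Finset.sum_le_sum_of_subset (Finset.sdiff_subset)) _

lemma sum_biUnion_le' {ι : Type*} (f : V → ℝ≥0∞) (s : Finset ι) (g : ι → Finset V) :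
    ∑ q ∈ s.biUnion g, f q ≤ ∑ C ∈ s, ∑ q ∈ g C, f q := by
  classical
  induction s using Finset.induction with
  | empty => simp
  | @insert a s ha ih =>
    rw [Finset.biUnion_insert, Finset.sum_insert ha]
    exact le_trans (sum_union_le' f _ _) (add_le_add_right ih _)


def pt (s t : Fin h → V) : Fin h ⊕ Fin h → V := Sum.elim s t

def mate : Fin h ⊕ Fin h → Fin h ⊕ Fin h := Sum.elim Sum.inr Sum.inl

def idx : Fin h ⊕ Fin h → Fin h := Sum.elim id id

lemma idx_mate (e : Fin h ⊕ Fin h) : idx (mate e) = idx e := by cases e <;> rfl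

lemma pt_pair (s t : Fin h → V) (e : Fin h ⊕ Fin h) :
    (pt s t e = s (idx e) ∧ pt s t (mate e) = t (idx e)) ∨
    (pt s t e = t (idx e) ∧ pt s t (mate e) = s (idx e)) := by
  cases e
  · left; exact ⟨rfl, rfl⟩
  · right; exact ⟨rfl, rfl⟩

noncomputable def AIdx (G : SimpleGraph V) (s t : Fin h → V) (E : Fin h → Prop) (X : Set V) :
    Finset (Fin h ⊕ Fin h) :=
  Finset.univ.filter (fun e => E (idx e) ∧ ¬ Satisfies G s t X (idx e))

noncomputable def AA (G : SimpleGraph V) (s t : Fin h → V) (E : Fin h → Prop) (X : Set V) :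
    Finset (Set V) :=
  (AIdx G s t E X).image (fun e => cmp G X (pt s t e))

lemma satisfies_mono {s t : Fin h → V} {X X' : Set V} (hXX' : X ⊆ X') {i : Fin h}
    (hs : Satisfies G s t X i) : Satisfies G s t X' i := by
  rw [satisfies_iff_rel] at hs ⊢
  exact hs.mono hXX'

lemma AIdx_mono {s t : Fin h → V} {E : Fin h → Prop} {X X' : Set V} (hXX' : X ⊆ X') :
    AIdx G s t E X' ⊆ AIdx G s t E X := by
  intro e he
  simp only [AIdx, Finset.mem_filter, Finset.mem_univ, true_and] at he ⊢
  exact ⟨he.1, fun hs => he.2 (satisfies_mono hXX' hs)⟩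

lemma mate_mem_AIdx {s t : Fin h → V} {E : Fin h → Prop} {X : Set V}
    {e : Fin h ⊕ Fin h} (he : e ∈ AIdx G s t E X) : mate e ∈ AIdx G s t E X := by
  simp only [AIdx, Finset.mem_filter, Finset.mem_univ, true_and, idx_mate] at he ⊢
  exact he

lemma rel_endpoints_of_pt {s t : Fin h → V} {X : Set V} {e : Fin h ⊕ Fin h}
    (hr : Rel G X (pt s t e) (pt s t (mate e))) : Rel G X (s (idx e)) (t (idx e)) := by
  rcases pt_pair s t e with ⟨h1, h2⟩ | ⟨h1, h2⟩
  · rwa [h1, h2] at hr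
  · rw [h1, h2] at hr; exact hr.symm

lemma not_rel_of_AIdx {s t : Fin h → V} {E : Fin h → Prop} {X : Set V}
    {e : Fin h ⊕ Fin h} (he : e ∈ AIdx G s t E X) :
    ¬ Rel G X (pt s t e) (pt s t (mate e)) := by
  intro hr
  simp only [AIdx, Finset.mem_filter] at he
  exact he.2.2 (satisfies_iff_rel.2 (rel_endpoints_of_pt hr))

lemma mate_ne (e : Fin h ⊕ Fin h) : mate e ≠ e := by cases e <;> simp [mate]

lemma par_lemma {s t : Fin h → V} {E : Fin h → Prop} {X : Set V}
    (hTX : ∀ e : Fin h ⊕ Fin h, pt s t e ∈ X) :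
    (AA G s t E X).card = 0 ∨ 2 ≤ (AA G s t E X).card := by
  rcases Finset.eq_empty_or_nonempty (AIdx G s t E X) with hE | ⟨e, he⟩
  · left; simp [AA, hE]
  · right
    refine Nat.succ_le_of_lt (Finset.one_lt_card.2 ?_)
    refine ⟨cmp G X (pt s t e), ?_, cmp G X (pt s t (mate e)), ?_, ?_⟩
    · exact Finset.mem_image_of_mem _ he
    · exact Finset.mem_image_of_mem _ (mate_mem_AIdx he)
    · intro heq
      exact not_rel_of_AIdx he (rel_of_cmp_eq (hTX (mate e)) heq)

lemma count_le {s t : Fin h → V} {E : Fin h → Prop} {X X' : Set V} (hXX' : X ⊆ X')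
    (EE : Finset (Fin h ⊕ Fin h)) (hE : EE ⊆ AIdx G s t E X)
    (hinj : Set.InjOn (fun e => cmp G X (pt s t e)) EE)
    (hconn : ∀ e ∈ EE, ∀ e' ∈ EE, Rel G X' (pt s t e) (pt s t e'))
    (hTX : ∀ e : Fin h ⊕ Fin h, pt s t e ∈ X) :
    (AA G s t E X').card + EE.card ≤ (AA G s t E X).card + 1 := by
  classical
  have hAI : AIdx G s t E X' ⊆ AIdx G s t E X := AIdx_mono hXX'
  -- the choice function
  have hwit : ∀ C ∈ AA G s t E X', ∃ e, e ∈ AIdx G s t E X' ∧ cmp G X' (pt s t e) = C := by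
    intro C hC
    simpa [AA, Finset.mem_image] using hC
  set ψ : Set V → Set V := fun C =>
    if hc : ∃ e, e ∈ AIdx G s t E X' ∧ cmp G X' (pt s t e) = C then
      cmp G X (pt s t hc.choose) else ∅ with hψ
  have hψspec : ∀ C ∈ AA G s t E X', ∃ e, e ∈ AIdx G s t E X' ∧ cmp G X' (pt s t e) = C ∧
      ψ C = cmp G X (pt s t e) := by
    intro C hC
    obtain ⟨e, he, hce⟩ := hwit C hC
    have hc : ∃ e, e ∈ AIdx G s t E X' ∧ cmp G X' (pt s t e) = C := ⟨e, he, hce⟩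
    exact ⟨hc.choose, hc.choose_spec.1, hc.choose_spec.2, by rw [hψ]; exact dif_pos hc⟩
  have hψmem : ∀ C ∈ AA G s t E X', ψ C ∈ AA G s t E X := by
    intro C hC
    obtain ⟨e, he, hce, hpsi⟩ := hψspec C hC
    rw [hpsi]
    exact Finset.mem_image_of_mem _ (hAI he)
  have hψinj : Set.InjOn ψ (AA G s t E X') := by
    intro C1 hC1 C2 hC2 heq
    obtain ⟨e1, he1, hce1, hp1⟩ := hψspec C1 (by exact hC1)
    obtain ⟨e2, he2, hce2, hp2⟩ := hψspec C2 (by exact hC2)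
    rw [hp1, hp2] at heq
    have hrel : Rel G X (pt s t e1) (pt s t e2) := rel_of_cmp_eq (hTX e2) heq
    have : cmp G X' (pt s t e1) = cmp G X' (pt s t e2) := cmp_eq_of_rel (hrel.mono hXX')
    rw [← hce1, ← hce2, this]
  set T : Finset (Set V) := EE.image (fun e => cmp G X (pt s t e)) with hT
  have hTcard : T.card = EE.card := Finset.card_image_of_injOn hinj
  have hTsub : T ⊆ AA G s t E X := by
    intro C hC
    obtain ⟨e, he, rfl⟩ := Finset.mem_image.1 hC
    exact Finset.mem_image_of_mem _ (hE he)
  rcases Finset.eq_empty_or_nonempty EE with hEE | ⟨e0, he0⟩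
  · -- trivial: card AA X' ≤ card AA X
    have : (AA G s t E X').card ≤ (AA G s t E X).card := by
      rw [← Finset.card_image_of_injOn hψinj]
      apply Finset.card_le_card
      intro C hC
      obtain ⟨C', hC', rfl⟩ := Finset.mem_image.1 hC
      exact hψmem C' hC'
    simp [hEE]
    omega
  · set K0 : Set V := cmp G X' (pt s t e0) with hK0
    have himg : (AA G s t E X').image ψ ⊆ (AA G s t E X \ T) ∪ {ψ K0} := by
      intro C hC
      obtain ⟨C', hC', rfl⟩ := Finset.mem_image.1 hC
      by_cases hCT : ψ C' ∈ T
      · obtain ⟨e, heE, hceq⟩ := Finset.mem_image.1 hCT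
        obtain ⟨e', he', hce', hp'⟩ := hψspec C' hC'
        rw [hp'] at hceq
        have hrel : Rel G X (pt s t e') (pt s t e) := rel_of_cmp_eq (hTX e) hceq.symm
        have hrel0 : Rel G X' (pt s t e) (pt s t e0) := hconn e heE e0 he0
        have hC'K0 : C' = K0 := by
          rw [← hce', hK0]
          exact cmp_eq_of_rel ((hrel.mono hXX').trans hrel0)
        rw [hC'K0]
        exact Finset.mem_union_right _ (Finset.mem_singleton_self _)
      · exact Finset.mem_union_left _ (Finset.mem_sdiff.2 ⟨hψmem C' hC', hCT⟩)
    have hcard1 : (AA G s t E X').card ≤ (AA G s t E X).card - T.card + 1 := by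
      rw [← Finset.card_image_of_injOn hψinj]
      calc ((AA G s t E X').image ψ).card ≤ ((AA G s t E X \ T) ∪ {ψ K0}).card :=
            Finset.card_le_card himg
      _ ≤ (AA G s t E X \ T).card + 1 := le_trans (Finset.card_union_le _ _) (by simp)
      _ = (AA G s t E X).card - T.card + 1 := by rw [Finset.card_sdiff_of_subset hTsub]
    have hTle : T.card ≤ (AA G s t E X).card := Finset.card_le_card hTsub
    omega
lemma lemA {β r : ℝ} (hr : 0 ≤ r) (w : V → ℝ≥0∞) (A : Set V) (xx : V → ℝ≥0∞)
    (hxx : ∀ v, xx v ≠ ⊤) {a b : V} (hda : dd G w A a = 0)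
    (hdb : ENNReal.ofReal r ≤ dd G w A b)
    (hsepa : ∀ S : Set V, a ∈ S → b ∉ S →
      ENNReal.ofReal β ≤ ∑ v ∈ Finset.univ, (if v ∈ cutδ G S then xx v else 0)) :
    ENNReal.ofReal β * ENNReal.ofReal r ≤
      ∑ v ∈ Finset.univ, xx v *
        (min (ENNReal.ofReal r) (dd G w A v) - min (ENNReal.ofReal r) (mm G w A v)) := by
  set r' : ℝ≥0∞ := ENNReal.ofReal r with hr'
  have hrtop : r' ≠ ⊤ := ENNReal.ofReal_ne_top
  set D : V → ℝ≥0∞ := fun v => min r' (dd G w A v) with hD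
  set M : V → ℝ≥0∞ := fun v => min r' (mm G w A v) with hM
  have hDtop : ∀ v, D v ≠ ⊤ := fun v => ne_top_of_le_ne_top hrtop (min_le_left _ _)
  have hMtop : ∀ v, M v ≠ ⊤ := fun v => ne_top_of_le_ne_top hrtop (min_le_left _ _)
  set Av : V → Set ℝ := fun v => Set.Ico (M v).toReal (D v).toReal with hAv
  have hAvIco : ∀ v, Av v ⊆ Set.Ico 0 r := by
    intro v ρ hρ
    refine ⟨le_trans ENNReal.toReal_nonneg hρ.1, lt_of_lt_of_le hρ.2 ?_⟩
    calc (D v).toReal ≤ r'.toReal := ENNReal.toReal_mono hrtop (min_le_left _ _)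
    _ = r := ENNReal.toReal_ofReal hr
  have hvol : ∀ v, volume (Av v) = D v - M v := by
    intro v
    rw [hAv, Real.volume_Ico]
    by_cases hMD : M v ≤ D v
    · rw [← ENNReal.toReal_sub_of_le hMD (hDtop v), ENNReal.ofReal_toReal]
      exact ne_top_of_le_ne_top (hDtop v) tsub_le_self
    · push_neg at hMD
      rw [tsub_eq_zero_of_le hMD.le, ENNReal.ofReal_eq_zero]
      have := (ENNReal.toReal_lt_toReal (hDtop v) (hMtop v)).2 hMD
      linarith
  set f : ℝ → ℝ≥0∞ := fun ρ => ∑ v ∈ Finset.univ, xx v * (Av v).indicator 1 ρ with hf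
  have hmeas : Measurable f := by
    apply Finset.measurable_sum
    intro v _
    exact (measurable_const.indicator measurableSet_Ico).const_mul _
  have hpoint : ∀ ρ ∈ Set.Ico (0:ℝ) r, ENNReal.ofReal β ≤ f ρ := by
    rintro ρ ⟨hρ0, hρr⟩
    set S : Set V := {q | dd G w A q ≤ ENNReal.ofReal ρ} with hSdef
    have haS : a ∈ S := by simp only [hSdef, Set.mem_setOf_eq, hda]; exact zero_le
    have hbS : b ∉ S := by
      simp only [hSdef, Set.mem_setOf_eq, not_le]
      exact lt_of_lt_of_le ((ENNReal.ofReal_lt_ofReal_iff_of_nonneg hρ0).2 hρr) hdb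
    refine le_trans (hsepa S haS hbS) (Finset.sum_le_sum ?_)
    intro v _
    by_cases hv : v ∈ cutδ G S
    · have hρAv : ρ ∈ Av v := by
        obtain ⟨hvS, u, huS, hadj⟩ := hv
        constructor
        · have h1 : M v ≤ ENNReal.ofReal ρ :=
            le_trans (min_le_right _ _) (le_trans (mm_le w A hadj) huS)
          calc (M v).toReal ≤ (ENNReal.ofReal ρ).toReal :=
                ENNReal.toReal_mono ENNReal.ofReal_ne_top h1
          _ = ρ := ENNReal.toReal_ofReal hρ0
        · have h2 : ENNReal.ofReal ρ < D v := by
            rw [hSdef, Set.mem_setOf_eq, not_le] at hvS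
            exact lt_min ((ENNReal.ofReal_lt_ofReal_iff_of_nonneg hρ0).2 hρr) hvS
          calc ρ = (ENNReal.ofReal ρ).toReal := (ENNReal.toReal_ofReal hρ0).symm
          _ < (D v).toReal := (ENNReal.toReal_lt_toReal ENNReal.ofReal_ne_top (hDtop v)).2 h2
      simp only [if_pos hv, Set.indicator_of_mem hρAv, Pi.one_apply, mul_one, le_refl]
    · simp only [if_neg hv]
      exact zero_le
  calc ENNReal.ofReal β * r'
      = ∫⁻ _ρ in Set.Ico (0:ℝ) r, ENNReal.ofReal β := by
        rw [setLIntegral_const, Real.volume_Ico, sub_zero]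
    _ ≤ ∫⁻ ρ in Set.Ico (0:ℝ) r, f ρ := setLIntegral_mono hmeas hpoint
    _ = ∑ v ∈ Finset.univ, ∫⁻ ρ in Set.Ico (0:ℝ) r, xx v * (Av v).indicator 1 ρ := by
        exact lintegral_finset_sum _ (fun v _ =>
          ((measurable_const.indicator measurableSet_Ico).const_mul _))
    _ = ∑ v ∈ Finset.univ, xx v * (D v - M v) := by
        refine Finset.sum_congr rfl (fun v _ => ?_)
        rw [lintegral_const_mul' _ _ (hxx v), lintegral_indicator_one measurableSet_Ico,
          Measure.restrict_apply measurableSet_Ico,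
          Set.inter_eq_self_of_subset_left (hAvIco v), hvol v]

lemma step_lemma {h : ℕ} (hh : 1 ≤ h) (s t : Fin h → V) (E : Fin h → Prop) (X : Set V)
    (hTX : ∀ e : Fin h ⊕ Fin h, pt s t e ∈ X)
    (w : V → ℝ≥0∞) (hw0 : ∀ v ∈ X, w v = 0)
    (xx : V → ℝ≥0∞) (hxx : ∀ v, xx v ≠ ⊤)
    (β r : ℝ) (hr : 0 ≤ r)
    (hsep : ∀ e ∈ AIdx G s t E X, ∀ S : Set V, pt s t e ∈ S → pt s t (mate e) ∉ S →
      ENNReal.ofReal β ≤ ∑ v ∈ Finset.univ, (if v ∈ cutδ G S then xx v else 0))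
    (htotal : ∑ v ∈ Finset.univ, xx v * w v <
      ENNReal.ofReal β * (AA G s t E X).card * ENNReal.ofReal r) :
    ∃ X' : Set V, X ⊆ X' ∧ ∃ k : ℕ, 1 ≤ k ∧ k ≤ (AA G s t E X).card ∧
      (AA G s t E X').card + (k - 1) ≤ (AA G s t E X).card ∧
      (AA G s t E X').card < (AA G s t E X).card ∧
      ∑ v ∈ Finset.univ.filter (fun v => v ∈ X' ∧ v ∉ X), w v ≤ k * ENNReal.ofReal r := by
  classical
  set r' : ℝ≥0∞ := ENNReal.ofReal r with hr'
  have hrtop : r' ≠ ⊤ := ENNReal.ofReal_ne_top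
  set a : ℕ := (AA G s t E X).card with ha
  by_cases hcase1 : ∃ e ∈ AIdx G s t E X,
      dd G w (cmp G X (pt s t e)) (pt s t (mate e)) < r'
  · -- CASE 1: cheap path to the mate
    obtain ⟨e, he, hlt⟩ := hcase1
    set A : Set V := cmp G X (pt s t e) with hA
    obtain ⟨u, huA, p, hp⟩ := dd_exists w A (pt s t (mate e)) (hlt.trans_le le_top).ne
    set X' : Set V := X ∪ {q | q ∈ p.support} with hX'
    have hXX' : X ⊆ X' := Set.subset_union_left
    have hrelX' : Rel G X' (pt s t e) (pt s t (mate e)) := by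
      have h1 : Rel G X (pt s t e) u := huA
      have h2 : Rel G X' u (pt s t (mate e)) := ⟨p, fun q hq => Or.inr hq⟩
      exact (h1.mono hXX').trans h2
    have hane : cmp G X (pt s t e) ≠ cmp G X (pt s t (mate e)) := by
      intro heq
      exact not_rel_of_AIdx he (rel_of_cmp_eq (hTX (mate e)) heq)
    have hcount : (AA G s t E X').card + 2 ≤ a + 1 := by
      have := count_le (G := G) (E := E) hXX' {e, mate e}
        (by intro q hq
            simp only [Finset.mem_insert, Finset.mem_singleton] at hq
            rcases hq with rfl | rfl
            exacts [he, mate_mem_AIdx he])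
        (by intro q1 hq1 q2 hq2 heq
            simp only [Finset.coe_insert, Set.mem_insert_iff, Finset.coe_singleton,
              Set.mem_singleton_iff] at hq1 hq2
            simp only at heq
            rcases hq1 with rfl | rfl <;> rcases hq2 with rfl | rfl
            · rfl
            · exact absurd heq hane
            · exact absurd heq.symm hane
            · rfl)
        (by intro q1 hq1 q2 hq2
            simp only [Finset.mem_insert, Finset.mem_singleton] at hq1 hq2
            rcases hq1 with rfl | rfl <;> rcases hq2 with rfl | rfl
            · exact Rel.refl (hXX' (hTX _))
            · exact hrelX'
            · exact hrelX'.symm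
            · exact Rel.refl (hXX' (hTX (mate e))))
        hTX
      have hcard2 : ({e, mate e} : Finset (Fin h ⊕ Fin h)).card = 2 := by
        rw [Finset.card_insert_of_notMem (by
          simp only [Finset.mem_singleton]
          exact fun hq => mate_ne e hq.symm), Finset.card_singleton]
      omega
    have hapos : 1 ≤ a := by
      rw [ha]
      refine Finset.card_pos.2 ⟨cmp G X (pt s t e), Finset.mem_image_of_mem _ he⟩
    refine ⟨X', hXX', 1, le_refl 1, hapos, by omega, by omega, ?_⟩
    refine le_trans (Finset.sum_le_sum_of_subset (t := p.support.toFinset)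
      (fun q hq => ?_)) ?_
    · simp only [Finset.mem_filter, Finset.mem_univ, true_and, hX', Set.mem_union,
        Set.mem_setOf_eq] at hq
      rcases hq.1 with hq1 | hq1
      · exact absurd hq1 hq.2
      · simpa using hq1
    · rw [Nat.cast_one, one_mul]
      have : (∑ q ∈ p.support.toFinset, w q) = wcost G w p := rfl
      rw [this, hp]
      exact hlt.le
  · push_neg at hcase1
    set μ : Set V → V → ℝ≥0∞ :=
      fun C v => min r' (dd G w C v) - min r' (mm G w C v) with hμ
    by_cases hcase2 : ∃ v : V, w v < ∑ C ∈ AA G s t E X, μ C v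
    · -- CASE 2: spider merge
      obtain ⟨v, hv⟩ := hcase2
      set J : Finset (Set V) := (AA G s t E X).filter (fun C => μ C v ≠ 0) with hJ
      have hJsub : J ⊆ AA G s t E X := Finset.filter_subset _ _
      have hJsum : ∑ C ∈ J, μ C v = ∑ C ∈ AA G s t E X, μ C v := Finset.sum_filter_ne_zero _
      have hvJ : w v < ∑ C ∈ J, μ C v := by rw [hJsum]; exact hv
      -- mm < r' on J
      have hmmlt : ∀ C ∈ J, mm G w C v < r' := by
        intro C hC
        rw [hJ, Finset.mem_filter] at hC
        by_contra hge
        push_neg at hge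
        apply hC.2
        show min r' (dd G w C v) - min r' (mm G w C v) = 0
        rw [min_eq_left hge]
        exact tsub_eq_zero_of_le (min_le_left _ _)
      -- μ ≤ w v
      have hμw : ∀ C : Set V, μ C v ≤ w v := by
        intro C
        show min r' (dd G w C v) - min r' (mm G w C v) ≤ w v
        rw [tsub_le_iff_right]
        refine le_trans (min_le_min le_rfl (dd_le_mm_add w C v)) ?_
        by_cases hcm : mm G w C v ≤ r'
        · calc min r' (mm G w C v + w v) ≤ mm G w C v + w v := min_le_right _ _
          _ = w v + min r' (mm G w C v) := by rw [min_eq_right hcm, add_comm]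
        · push_neg at hcm
          calc min r' (mm G w C v + w v) ≤ r' := min_le_left _ _
          _ = min r' (mm G w C v) := (min_eq_left hcm.le).symm
          _ ≤ w v + min r' (mm G w C v) := le_add_self
      have hk2 : 2 ≤ J.card := by
        by_contra hk1
        push_neg at hk1
        have hsub := Finset.card_le_one.1 (Nat.lt_succ_iff.1 hk1)
        have hle : ∑ C ∈ J, μ C v ≤ w v := by
          rcases Finset.eq_empty_or_nonempty J with hJe | ⟨C0, hC0⟩
          · simp [hJe]
          · have hJs : J = {C0} :=
              Finset.eq_singleton_iff_unique_mem.2 ⟨hC0, fun y hy => hsub y hy C0 hC0⟩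
            rw [hJs, Finset.sum_singleton]; exact hμw C0
        exact absurd hvJ (not_lt.2 hle)
      -- μ C v + mm ≤ r' on J
      have hμmm : ∀ C ∈ J, μ C v + mm G w C v ≤ r' := by
        intro C hC
        have h1 : μ C v ≤ r' - mm G w C v := by
          show min r' (dd G w C v) - min r' (mm G w C v) ≤ _
          refine tsub_le_tsub (min_le_left _ _) (le_of_eq ?_)
          rw [min_eq_right (hmmlt C hC).le]
        calc μ C v + mm G w C v ≤ (r' - mm G w C v) + mm G w C v := add_le_add_left h1 _
        _ = r' := tsub_add_cancel_of_le (hmmlt C hC).le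
      -- key strict bound
      have hcost_key : w v + ∑ C ∈ J, mm G w C v < J.card * r' := by
        have hfin : ∑ C ∈ J, mm G w C v ≠ ⊤ :=
          ENNReal.sum_ne_top.2 (fun C hC => ((hmmlt C hC).trans_le le_top).ne)
        calc w v + ∑ C ∈ J, mm G w C v < (∑ C ∈ J, μ C v) + ∑ C ∈ J, mm G w C v :=
              ENNReal.add_lt_add_right hfin hvJ
        _ = ∑ C ∈ J, (μ C v + mm G w C v) := by rw [Finset.sum_add_distrib]
        _ ≤ ∑ _C ∈ J, r' := Finset.sum_le_sum hμmm
        _ = J.card * r' := by rw [Finset.sum_const, nsmul_eq_mul]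
      -- realize walks
      have hreal : ∀ C : Set V, ∃ (F : Finset V) (y : V),
          (C ∈ J → y ∈ C ∧ (∑ q ∈ F, w q) = mm G w C v ∧
            ∀ Y : Set V, ↑F ⊆ Y → v ∈ Y → Rel G Y y v) := by
        intro C
        by_cases hC : C ∈ J
        · have hmmne : mm G w C v ≠ ⊤ := ((hmmlt C hC).trans_le le_top).ne
          obtain ⟨u, hadj, hdu⟩ := mm_exists w C v hmmne
          obtain ⟨y, hyC, p, hpcost⟩ := dd_exists w C u (by rw [hdu]; exact hmmne)
          refine ⟨p.support.toFinset, y, fun _ => ⟨hyC, ?_, ?_⟩⟩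
          · rw [← hdu, ← hpcost]; rfl
          · intro Y hFY hvY
            refine ⟨p.concat hadj.symm, fun q hq => ?_⟩
            rw [SimpleGraph.Walk.support_concat,
              List.mem_append] at hq
            rcases hq with hq | hq
            · exact hFY (by simpa using hq)
            · simp only [List.mem_singleton] at hq
              subst hq
              exact hvY
        · exact ⟨∅, v, fun hc => absurd hc hC⟩
      choose Fn yy hspec using hreal
      set FF : Finset V := insert v (J.biUnion Fn) with hFF
      set X' : Set V := X ∪ ↑FF with hX'
      have hXX' : X ⊆ X' := Set.subset_union_left
      have hvX' : v ∈ X' := Or.inr (by simp [hFF])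
      have hFX' : ∀ C ∈ J, ↑(Fn C) ⊆ X' := by
        intro C hC q hq
        refine Or.inr ?_
        simp only [hFF, Finset.coe_insert, Set.mem_insert_iff, Finset.coe_biUnion,
          Set.mem_iUnion, Finset.mem_coe]
        exact Or.inr ⟨C, hC, by simpa using hq⟩
      -- witnesses
      have hwitJ : ∀ C : Set V, ∃ e, C ∈ J →
          (e ∈ AIdx G s t E X ∧ cmp G X (pt s t e) = C) := by
        intro C
        by_cases hC : C ∈ J
        · obtain ⟨e, he, hce⟩ := Finset.mem_image.1 (hJsub hC)
          exact ⟨e, fun _ => ⟨he, hce⟩⟩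
        · exact ⟨Sum.inl ⟨0, hh⟩, fun hc => absurd hc hC⟩
      choose ew hew using hwitJ
      set EE : Finset (Fin h ⊕ Fin h) := J.image ew with hEE
      have hewinj : Set.InjOn ew J := by
        intro C1 hC1 C2 hC2 heq
        have h1 := (hew C1 hC1).2
        have h2 := (hew C2 hC2).2
        rw [← h1, ← h2, heq]
      have hEEcard : EE.card = J.card := Finset.card_image_of_injOn hewinj
      have hEEsub : EE ⊆ AIdx G s t E X := by
        intro q hq
        obtain ⟨C, hC, rfl⟩ := Finset.mem_image.1 hq
        exact (hew C hC).1
      have hrelv : ∀ C ∈ J, Rel G X' (pt s t (ew C)) v := by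
        intro C hC
        obtain ⟨hyC, hsum, hrel⟩ := hspec C hC
        have h1 : yy C ∈ cmp G X (pt s t (ew C)) := by
          rw [(hew C hC).2]; exact hyC
        have h1' : Rel G X (pt s t (ew C)) (yy C) := h1
        exact (h1'.mono hXX').trans (hrel X' (hFX' C hC) hvX')
      have hinjEE : Set.InjOn (fun e => cmp G X (pt s t e)) EE := by
        intro e1 he1 e2 he2 heq
        rw [Finset.mem_coe] at he1 he2
        obtain ⟨C1, hC1, h1⟩ := Finset.mem_image.1 he1
        obtain ⟨C2, hC2, h2⟩ := Finset.mem_image.1 he2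
        rw [← h1, ← h2]
        rw [← h1, ← h2] at heq
        simp only at heq
        rw [(hew C1 hC1).2, (hew C2 hC2).2] at heq
        rw [heq]
      have hconnEE : ∀ e1 ∈ EE, ∀ e2 ∈ EE, Rel G X' (pt s t e1) (pt s t e2) := by
        intro e1 he1 e2 he2
        obtain ⟨C1, hC1, h1⟩ := Finset.mem_image.1 he1
        obtain ⟨C2, hC2, h2⟩ := Finset.mem_image.1 he2
        rw [← h1, ← h2]
        exact (hrelv C1 hC1).trans (hrelv C2 hC2).symm
      have hcount := count_le (G := G) (E := E) hXX' EE hEEsub hinjEE hconnEE hTX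
      rw [hEEcard] at hcount
      have hka : J.card ≤ a := Finset.card_le_card hJsub
      refine ⟨X', hXX', J.card, by omega, hka, by omega, by omega, ?_⟩
      refine le_trans (Finset.sum_le_sum_of_subset (t := FF) (fun q hq => ?_))
        (le_trans ?_ hcost_key.le)
      · simp only [Finset.mem_filter, Finset.mem_univ, true_and, hX',
          Set.mem_union, Finset.mem_coe] at hq
        rcases hq.1 with hq1 | hq1
        · exact absurd hq1 hq.2
        · exact hq1
      · calc ∑ q ∈ FF, w q
            ≤ w v + ∑ q ∈ J.biUnion Fn, w q := by
              rw [hFF]; exact sum_insert_le' w v _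
          _ ≤ w v + ∑ C ∈ J, ∑ q ∈ Fn C, w q := add_le_add_right (sum_biUnion_le' w J Fn) _
          _ = w v + ∑ C ∈ J, mm G w C v := by
              congr 1
              exact Finset.sum_congr rfl (fun C hC => (hspec C hC).2.1)
    · -- CASE 3: contradiction
      exfalso
      push_neg at hcase2
      have hCle : ∀ C ∈ AA G s t E X,
          ENNReal.ofReal β * r' ≤ ∑ v ∈ Finset.univ, xx v * μ C v := by
        intro C hC
        obtain ⟨e, he, rfl⟩ := Finset.mem_image.1 hC
        refine lemA hr w _ xx hxx ?_ ?_ (hsep e he)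
        · exact dd_zero w (mem_cmp_self (hTX e)) (hw0 _ (hTX e))
        · exact hcase1 e he
      have hsum1 : (a : ℝ≥0∞) * (ENNReal.ofReal β * r') ≤
          ∑ C ∈ AA G s t E X, ∑ v ∈ Finset.univ, xx v * μ C v := by
        calc (a : ℝ≥0∞) * (ENNReal.ofReal β * r')
            = ∑ _C ∈ AA G s t E X, ENNReal.ofReal β * r' := by
              rw [Finset.sum_const, nsmul_eq_mul, ha]
        _ ≤ _ := Finset.sum_le_sum hCle
      have hsum2 : ∑ C ∈ AA G s t E X, ∑ v ∈ Finset.univ, xx v * μ C v ≤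
          ∑ v ∈ Finset.univ, xx v * w v := by
        rw [Finset.sum_comm]
        refine Finset.sum_le_sum (fun v _ => ?_)
        rw [← Finset.mul_sum]
        exact mul_le_mul_right (hcase2 v) _
      have := lt_of_le_of_lt (hsum1.trans hsum2) htotal
      rw [mul_comm (ENNReal.ofReal β) (a : ℝ≥0∞), mul_assoc] at this
      exact lt_irrefl _ this

lemma sum_union_le_real (f : V → ℝ) (hf : ∀ v, 0 ≤ f v) (s t : Finset V) :
    ∑ q ∈ s ∪ t, f q ≤ ∑ q ∈ s, f q + ∑ q ∈ t, f q := by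
  calc ∑ q ∈ s ∪ t, f q = ∑ q ∈ s, f q + ∑ q ∈ t \ s, f q := by
        rw [← Finset.sum_union Finset.disjoint_sdiff, Finset.union_sdiff_self_eq_union]
  _ ≤ _ := add_le_add_right (Finset.sum_le_sum_of_subset_of_nonneg Finset.sdiff_subset
        (fun q _ _ => hf q)) _

lemma E_of_AIdx {h : ℕ} {s t : Fin h → V} {E : Fin h → Prop} {X : Set V}
    {e : Fin h ⊕ Fin h} (he : e ∈ AIdx G s t E X) : E (idx e) :=
  (Finset.mem_filter.1 he).2.1

lemma grow {h : ℕ} (hh : 1 ≤ h) (s t : Fin h → V) (E : Fin h → Prop)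
    (xx : V → ℝ≥0∞) (hxx : ∀ v, xx v ≠ ⊤) (c : V → ℝ) (hc : ∀ v, 0 ≤ c v)
    (β L ε : ℝ) (hβ : 0 < β) (hL : 0 ≤ L) (hε : 0 < ε)
    (hsepE : ∀ e : Fin h ⊕ Fin h, E (idx e) → ∀ S : Set V, pt s t e ∈ S →
      pt s t (mate e) ∉ S →
      ENNReal.ofReal β ≤ ∑ v ∈ Finset.univ, (if v ∈ cutδ G S then xx v else 0))
    (hxc : ∑ v ∈ Finset.univ, xx v * ENNReal.ofReal (c v) ≤ ENNReal.ofReal L) :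
    ∀ (n : ℕ) (X : Set V), (∀ e : Fin h ⊕ Fin h, pt s t e ∈ X) →
      (AA G s t E X).card ≤ n →
    ∃ X', X ⊆ X' ∧ (AA G s t E X').card = 0 ∧
      ∑ v ∈ Finset.univ.filter (fun v => v ∈ X' ∧ v ∉ X), c v ≤
        2 * (L / β) * (∑ j ∈ Finset.Ioc 1 n, (1:ℝ)/j) + 2 * n * ε := by
  have hSnonneg : ∀ m : ℕ, 0 ≤ ∑ j ∈ Finset.Ioc 1 m, (1:ℝ)/j := by
    intro m
    exact Finset.sum_nonneg (fun j _ => by positivity)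
  have hSmono : ∀ m m' : ℕ, m ≤ m' →
      (∑ j ∈ Finset.Ioc 1 m, (1:ℝ)/j) ≤ ∑ j ∈ Finset.Ioc 1 m', (1:ℝ)/j := by
    intro m m' hmm'
    refine Finset.sum_le_sum_of_subset_of_nonneg ?_ (fun j _ _ => by positivity)
    exact Finset.Ioc_subset_Ioc le_rfl hmm'
  have hterm : ∀ m₁ m₂ : ℕ, 1 ≤ m₁ → m₁ ≤ m₂ →
      ((m₂ - m₁ : ℕ) : ℝ) * (1/(m₂:ℝ)) ≤
        (∑ j ∈ Finset.Ioc 1 m₂, (1:ℝ)/j) - ∑ j ∈ Finset.Ioc 1 m₁, (1:ℝ)/j := by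
    intro m₁ m₂ hm₁ hm₁₂
    have hsplit : (∑ j ∈ Finset.Ioc 1 m₁, (1:ℝ)/j) + ∑ j ∈ Finset.Ioc m₁ m₂, (1:ℝ)/j =
        ∑ j ∈ Finset.Ioc 1 m₂, (1:ℝ)/j :=
      Finset.sum_Ioc_consecutive _ hm₁ hm₁₂
    have hlow : ((m₂ - m₁ : ℕ) : ℝ) * (1/(m₂:ℝ)) ≤ ∑ j ∈ Finset.Ioc m₁ m₂, (1:ℝ)/j := by
      have hcard : (Finset.Ioc m₁ m₂).card = m₂ - m₁ := Nat.card_Ioc m₁ m₂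
      have := Finset.card_nsmul_le_sum (Finset.Ioc m₁ m₂) (fun j => (1:ℝ)/j) (1/(m₂:ℝ))
        (fun j hj => by
          rw [Finset.mem_Ioc] at hj
          have hj1 : (0:ℝ) < j := by
            have : 1 ≤ j := le_trans hm₁ hj.1.le
            exact_mod_cast Nat.lt_of_lt_of_le Nat.zero_lt_one this
          have hj2 : (j:ℝ) ≤ m₂ := by exact_mod_cast hj.2
          exact one_div_le_one_div_of_le hj1 hj2)
      rw [hcard, nsmul_eq_mul] at this
      exact this
    linarith
  intro n
  induction n using Nat.strong_induction_on with
  | _ n IH =>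
    intro X hTX hcard
    by_cases hA0 : (AA G s t E X).card = 0
    · refine ⟨X, le_rfl, hA0, ?_⟩
      have : Finset.univ.filter (fun v => v ∈ X ∧ v ∉ X) = ∅ := by
        apply Finset.filter_false_of_mem
        intro v _
        simp
      rw [this, Finset.sum_empty]
      have h2n : 0 ≤ 2 * (n:ℝ) * ε := by positivity
      have := hSnonneg n
      have hLβ : 0 ≤ L / β := div_nonneg hL hβ.le
      nlinarith
    · set a : ℕ := (AA G s t E X).card with haa
      have ha2 : 2 ≤ a := by
        rcases par_lemma (G := G) (E := E) hTX with h0 | h2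
        · exact absurd h0 hA0
        · exact h2
      have hapos : (0:ℝ) < a := by positivity
      set ra : ℝ := L / (β * a) + ε with hra
      have hra0 : 0 ≤ ra := by
        have : 0 ≤ L / (β * a) := div_nonneg hL (by positivity)
        rw [hra]; linarith
      set w : V → ℝ≥0∞ := fun v => if v ∈ X then 0 else ENNReal.ofReal (c v) with hw
      have hrapos : 0 < ra := by
        have h1 : 0 ≤ L / (β * (a:ℝ)) := div_nonneg hL (le_of_lt (mul_pos hβ hapos))
        rw [hra]; linarith
      have hstep := step_lemma (G := G) hh s t E X hTX w
        (fun v hv => by rw [hw]; simp [hv]) xx hxx β ra hra0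
        (fun e he S hS hS' => hsepE e (E_of_AIdx he) S hS hS')
        (by
          refine lt_of_le_of_lt (le_trans (Finset.sum_le_sum (fun v _ => ?_)) hxc) ?_
          · refine mul_le_mul_right ?_ _
            show (if v ∈ X then 0 else ENNReal.ofReal (c v)) ≤ ENNReal.ofReal (c v)
            split
            · exact zero_le
            · exact le_rfl
          · have hcast : (ENNReal.ofReal β) * ((AA G s t E X).card : ℝ≥0∞) *
                ENNReal.ofReal ra = ENNReal.ofReal (β * a * ra) := by
              rw [ENNReal.ofReal_mul (by positivity), ENNReal.ofReal_mul hβ.le,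
                ENNReal.ofReal_natCast]
            rw [hcast]
            rw [ENNReal.ofReal_lt_ofReal_iff (mul_pos (mul_pos hβ hapos) hrapos)]
            have hid : β * (a:ℝ) * (L / (β * a)) = L := by field_simp
            have hgoal : β * (a:ℝ) * ra = L + β * a * ε := by rw [hra, mul_add, hid]
            rw [hgoal]
            linarith [mul_pos (mul_pos hβ hapos) hε])
      obtain ⟨X₁, hXX₁, k, hk1, hka, hcnt1, hcnt2, hwcost⟩ := hstep
      set a₁ : ℕ := (AA G s t E X₁).card with ha₁
      have hTX₁ : ∀ e : Fin h ⊕ Fin h, pt s t e ∈ X₁ := fun e => hXX₁ (hTX e)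
      have ha₁n : a₁ < n := lt_of_lt_of_le hcnt2 hcard
      obtain ⟨X₂, hX₁X₂, hA₂, hcost₂⟩ := IH a₁ ha₁n X₁ hTX₁ le_rfl
      refine ⟨X₂, hXX₁.trans hX₁X₂, hA₂, ?_⟩
      -- convert step cost to ℝ
      have hcost₁ : ∑ v ∈ Finset.univ.filter (fun v => v ∈ X₁ ∧ v ∉ X), c v ≤ k * ra := by
        have heq : ∑ v ∈ Finset.univ.filter (fun v => v ∈ X₁ ∧ v ∉ X), c v =
            (∑ v ∈ Finset.univ.filter (fun v => v ∈ X₁ ∧ v ∉ X), w v).toReal := by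
          rw [ENNReal.toReal_sum (fun v _ => by
            show (if v ∈ X then 0 else ENNReal.ofReal (c v)) ≠ ⊤
            split
            exacts [ENNReal.zero_ne_top, ENNReal.ofReal_ne_top])]
          refine Finset.sum_congr rfl (fun v hv => ?_)
          rw [Finset.mem_filter] at hv
          show c v = (if v ∈ X then 0 else ENNReal.ofReal (c v)).toReal
          rw [if_neg hv.2.2, ENNReal.toReal_ofReal (hc v)]
        rw [heq]
        calc (∑ v ∈ Finset.univ.filter (fun v => v ∈ X₁ ∧ v ∉ X), w v).toReal
            ≤ ((k : ℝ≥0∞) * ENNReal.ofReal ra).toReal :=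
              ENNReal.toReal_mono (ENNReal.mul_ne_top (ENNReal.natCast_ne_top k)
                ENNReal.ofReal_ne_top) hwcost
        _ = k * ra := by rw [ENNReal.toReal_mul, ENNReal.toReal_natCast,
              ENNReal.toReal_ofReal hra0]
      -- combine costs
      have hsum_split : ∑ v ∈ Finset.univ.filter (fun v => v ∈ X₂ ∧ v ∉ X), c v ≤
          (∑ v ∈ Finset.univ.filter (fun v => v ∈ X₁ ∧ v ∉ X), c v) +
          ∑ v ∈ Finset.univ.filter (fun v => v ∈ X₂ ∧ v ∉ X₁), c v := by
        refine le_trans (Finset.sum_le_sum_of_subset_of_nonneg (t :=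
          Finset.univ.filter (fun v => v ∈ X₁ ∧ v ∉ X) ∪
          Finset.univ.filter (fun v => v ∈ X₂ ∧ v ∉ X₁)) (fun q hq => ?_)
          (fun q _ _ => hc q)) (sum_union_le_real c hc _ _)
        rw [Finset.mem_filter] at hq
        rw [Finset.mem_union, Finset.mem_filter, Finset.mem_filter]
        by_cases hq1 : q ∈ X₁
        · exact Or.inl ⟨Finset.mem_univ q, hq1, hq.2.2⟩
        · exact Or.inr ⟨Finset.mem_univ q, hq.2.1, hq1⟩
      -- the arithmetic
      rw [← haa] at hka hcnt1 hcnt2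
      clear_value a a₁ ra
      have hka' : (k:ℝ) ≤ a := by exact_mod_cast hka
      have hk1' : (1:ℝ) ≤ k := by exact_mod_cast hk1
      have hkey : (k:ℝ)/a ≤ 2 * ((∑ j ∈ Finset.Ioc 1 a, (1:ℝ)/j) -
          ∑ j ∈ Finset.Ioc 1 a₁, (1:ℝ)/j) := by
        rcases par_lemma (G := G) (E := E) hTX₁ with h0 | h2
        · rw [← ha₁] at h0
          rw [h0]
          rw [show Finset.Ioc 1 0 = (∅ : Finset ℕ) from Finset.Ioc_eq_empty (by omega),
            Finset.sum_empty, sub_zero]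
          have h1 := hterm 1 a le_rfl (by omega)
          have hS1 : (∑ j ∈ Finset.Ioc (1:ℕ) 1, (1:ℝ)/j) = 0 := by simp
          rw [hS1, sub_zero] at h1
          have hcst : ((a - 1 : ℕ):ℝ) = (a:ℝ) - 1 := by
            rw [Nat.cast_sub (by omega)]; norm_num
          rw [hcst] at h1
          have hka2 : (k:ℝ)/a ≤ 1 := by
            rw [div_le_one hapos]; exact hka'
          have ha2' : (2:ℝ) ≤ a := by exact_mod_cast ha2
          have hre : 2 * (((a:ℝ) - 1) * (1/(a:ℝ))) = (2*((a:ℝ)-1))/a := by ring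
          have h2 : (1:ℝ) ≤ 2 * (((a:ℝ) - 1) * (1/(a:ℝ))) := by
            rw [hre, le_div_iff₀ hapos, one_mul]
            linarith
          linarith
        · rw [← ha₁] at h2
          have hd : a₁ + (k-1) ≤ a := hcnt1
          have hd1 : a₁ < a := hcnt2
          have h1 := hterm a₁ a (by omega) (by omega)
          have hkd : (k:ℝ) ≤ 2 * ((a - a₁ : ℕ):ℝ) := by
            have : k ≤ 2 * (a - a₁) := by omega
            exact_mod_cast this
          calc (k:ℝ)/a ≤ (2 * ((a - a₁:ℕ):ℝ)) * (1/(a:ℝ)) := by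
                rw [div_eq_mul_one_div]
                exact mul_le_mul_of_nonneg_right hkd (by positivity)
          _ = 2 * (((a - a₁:ℕ):ℝ) * (1/(a:ℝ))) := by ring
          _ ≤ _ := by linarith
      have hfin : k * ra + (2 * (L / β) * (∑ j ∈ Finset.Ioc 1 a₁, (1:ℝ)/j) + 2 * a₁ * ε) ≤
          2 * (L / β) * (∑ j ∈ Finset.Ioc 1 n, (1:ℝ)/j) + 2 * n * ε := by
        have hkra : (k:ℝ) * ra = (L/β) * ((k:ℝ)/a) + k * ε := by
          rw [hra]
          field_simp
        have hLβ : 0 ≤ L / β := div_nonneg hL hβ.le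
        have hmul := mul_le_mul_of_nonneg_left hkey hLβ
        have hexp : (L/β) * (2 * ((∑ j ∈ Finset.Ioc 1 a, (1:ℝ)/j) -
            ∑ j ∈ Finset.Ioc 1 a₁, (1:ℝ)/j)) =
            2 * (L/β) * (∑ j ∈ Finset.Ioc 1 a, (1:ℝ)/j) -
            2 * (L/β) * (∑ j ∈ Finset.Ioc 1 a₁, (1:ℝ)/j) := by ring
        rw [hexp] at hmul
        have hSan2 : 2 * (L/β) * (∑ j ∈ Finset.Ioc 1 a, (1:ℝ)/j) ≤
            2 * (L/β) * (∑ j ∈ Finset.Ioc 1 n, (1:ℝ)/j) :=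
          mul_le_mul_of_nonneg_left (hSmono a n hcard) (by positivity)
        have hkn : (k:ℝ) + 2 * a₁ ≤ 2 * n := by
          have hnat : k + 2 * a₁ ≤ 2 * n := by omega
          exact_mod_cast hnat
        have hkne : (k:ℝ) * ε + 2 * (a₁:ℝ) * ε ≤ 2 * (n:ℝ) * ε := by
          have h1 := mul_le_mul_of_nonneg_right hkn hε.le
          calc (k:ℝ) * ε + 2 * (a₁:ℝ) * ε = ((k:ℝ) + 2 * a₁) * ε := by ring
          _ ≤ (2 * (n:ℝ)) * ε := h1
          _ = 2 * (n:ℝ) * ε := by ring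
        rw [hkra]
        linarith
      linarith

end PCSFAux

open scoped ENNReal

lemma finsum_mem_eq_finset {α : Type*} (f : α → ℝ) (A : Set α) (s : Finset α)
    (hs : ∀ j, j ∈ s ↔ j ∈ A) : ∑ᶠ i ∈ A, f i = ∑ i ∈ s, f i := by
  have hA : A = ↑s := by
    ext j
    simpa using (hs j).symm
  rw [hA, finsum_mem_coe_finset]

theorem stmt7 {V : Type*} [Fintype V] (G : SimpleGraph V)
    (h : ℕ) (hh : 1 ≤ h) (s t : Fin h → V)
    (hdist : Function.Injective (Sum.elim s t))
    (c : V → ℝ) (hc : ∀ v, 0 ≤ c v) (hcs : ∀ i, c (s i) = 0) (hct : ∀ i, c (t i) = 0)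
    (pen : Fin h → ℝ) (hpen : ∀ i, 0 ≤ pen i)
    (x : V → ℝ) (hx : ∀ v, 0 ≤ x v)
    (z : Set V → ℝ) (hz : ∀ S : Set V, (∃ i, Separates s t i S) → 0 ≤ z S)
    (hfeas : ∀ (i : Fin h) (S : Set V), Separates s t i S →
      1 ≤ (∑ᶠ v ∈ cutδ G S, x v) +
          ∑ᶠ R ∈ {R : Set V | S ⊆ R ∧ Separates s t i R}, z R) :
    ∃ X : Set V, pcsf G s t c pen X ≤
      2 * (∑ j ∈ Finset.Icc 1 (2 * h), (1 : ℝ) / j) *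
        ((∑ᶠ v ∈ {v : V | v ∉ Set.range s ∪ Set.range t}, c v * x v) +
          ∑ᶠ S ∈ {S : Set V | ∃ i, Separates s t i S}, setPenalty s t pen S * z S) := by
  classical
  set TT : Set V := Set.range s ∪ Set.range t with hTT
  set H : ℝ := ∑ j ∈ Finset.Icc 1 (2*h), (1:ℝ)/j with hHdef
  have hH32 : (3/2 : ℝ) ≤ H := by
    have hsub : Finset.Icc 1 2 ⊆ Finset.Icc 1 (2*h) := Finset.Icc_subset_Icc le_rfl (by omega)
    have hIcc : Finset.Icc (1:ℕ) 2 = {1, 2} := by decide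
    have h2 : (∑ j ∈ Finset.Icc (1:ℕ) 2, (1:ℝ)/j) = 3/2 := by
      rw [hIcc, Finset.sum_insert (by decide), Finset.sum_singleton]
      norm_num
    rw [hHdef, ← h2]
    exact Finset.sum_le_sum_of_subset_of_nonneg hsub (fun j _ _ => by positivity)
  have hH1 : (1:ℝ) < H := by linarith
  have hH0 : (0:ℝ) < H := by linarith
  set β : ℝ := 1 - 1/H with hβdef
  have hβpos : 0 < β := by
    rw [hβdef]
    have h1H : 1/H < 1 := by rw [div_lt_one hH0]; exact hH1
    linarith
  set Zi : Fin h → ℝ := fun i =>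
    ∑ S ∈ Finset.univ.filter (fun S : Set V => Separates s t i S), z S with hZi
  have hZnonneg : ∀ i, 0 ≤ Zi i := by
    intro i
    exact Finset.sum_nonneg (fun S hS => hz S ⟨i, (Finset.mem_filter.1 hS).2⟩)
  set E : Fin h → Prop := fun i => Zi i < 1/H with hE
  set xx : V → ℝ≥0∞ := fun v => ENNReal.ofReal (x v) with hxxdef
  set L : ℝ := ∑ v ∈ Finset.univ, c v * x v with hLdef
  have hL0 : 0 ≤ L := Finset.sum_nonneg (fun v _ => mul_nonneg (hc v) (hx v))
  have hcT : ∀ v ∈ TT, c v = 0 := by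
    rintro v (⟨i, rfl⟩ | ⟨i, rfl⟩)
    exacts [hcs i, hct i]
  -- the separation hypothesis for the growth lemma
  have hsepE : ∀ e : Fin h ⊕ Fin h, E (PCSFAux.idx e) → ∀ S : Set V,
      PCSFAux.pt s t e ∈ S → PCSFAux.pt s t (PCSFAux.mate e) ∉ S →
      ENNReal.ofReal β ≤ ∑ v ∈ Finset.univ, (if v ∈ cutδ G S then xx v else 0) := by
    intro e hEe S hS hS'
    have hsep : Separates s t (PCSFAux.idx e) S := by
      rcases PCSFAux.pt_pair s t e with ⟨h1, h2⟩ | ⟨h1, h2⟩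
      · rw [h1] at hS; rw [h2] at hS'; exact Or.inl ⟨hS, hS'⟩
      · rw [h1] at hS; rw [h2] at hS'; exact Or.inr ⟨hS, hS'⟩
    have hfe := hfeas (PCSFAux.idx e) S hsep
    have hzle : (∑ᶠ R ∈ {R : Set V | S ⊆ R ∧ Separates s t (PCSFAux.idx e) R}, z R) ≤
        Zi (PCSFAux.idx e) := by
      rw [finsum_mem_eq_finset z _ (Finset.univ.filter
        (fun R : Set V => S ⊆ R ∧ Separates s t (PCSFAux.idx e) R)) (fun R => by simp), hZi]
      refine Finset.sum_le_sum_of_subset_of_nonneg ?_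
        (fun R hR _ => hz R ⟨PCSFAux.idx e, (Finset.mem_filter.1 hR).2⟩)
      intro R hR
      simp only [Finset.mem_filter] at hR ⊢
      exact ⟨hR.1, hR.2.2⟩
    have hEe' : Zi (PCSFAux.idx e) < 1/H := hEe
    have hcut : β ≤ ∑ᶠ v ∈ cutδ G S, x v := by
      rw [hβdef]
      linarith
    rw [finsum_mem_eq_finset x _ (Finset.univ.filter (fun v : V => v ∈ cutδ G S))
      (fun v => by simp)] at hcut
    calc ENNReal.ofReal β
        ≤ ENNReal.ofReal (∑ v ∈ Finset.univ.filter (fun v : V => v ∈ cutδ G S), x v) :=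
          ENNReal.ofReal_le_ofReal hcut
    _ = ∑ v ∈ Finset.univ.filter (fun v : V => v ∈ cutδ G S), xx v :=
          ENNReal.ofReal_sum_of_nonneg (fun v _ => hx v)
    _ = ∑ v ∈ Finset.univ, (if v ∈ cutδ G S then xx v else 0) := Finset.sum_filter _ _
  have hxc : ∑ v ∈ Finset.univ, xx v * ENNReal.ofReal (c v) ≤ ENNReal.ofReal L := by
    refine le_of_eq ?_
    rw [hLdef, ENNReal.ofReal_sum_of_nonneg (fun v _ => mul_nonneg (hc v) (hx v))]
    refine Finset.sum_congr rfl (fun v _ => ?_)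
    rw [hxxdef]
    rw [← ENNReal.ofReal_mul (hx v), mul_comm]
  have hTTmem : ∀ e : Fin h ⊕ Fin h, PCSFAux.pt s t e ∈ TT := by
    intro e
    cases e with
    | inl i => exact Or.inl ⟨i, rfl⟩
    | inr i => exact Or.inr ⟨i, rfl⟩
  have hcard2h : (PCSFAux.AA G s t E TT).card ≤ 2*h := by
    calc (PCSFAux.AA G s t E TT).card ≤ (PCSFAux.AIdx G s t E TT).card :=
          Finset.card_image_le
    _ ≤ Fintype.card (Fin h ⊕ Fin h) := Finset.card_le_univ _
    _ = 2*h := by simp [Fintype.card_sum]; omega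
  -- penalty double counting
  have hsetPen : ∀ S : Set V, setPenalty s t pen S =
      (1/2) * ∑ i ∈ Finset.univ.filter (fun i : Fin h => Separates s t i S), pen i := by
    intro S
    rw [setPenalty, finsum_mem_eq_finset pen _ (Finset.univ.filter
      (fun i : Fin h => Separates s t i S)) (fun i => by simp)]
  have hPP : (∑ᶠ S ∈ {S : Set V | ∃ i, Separates s t i S}, setPenalty s t pen S * z S) =
      ∑ S ∈ Finset.univ.filter (fun S : Set V => ∃ i, Separates s t i S),
        setPenalty s t pen S * z S :=
    finsum_mem_eq_finset _ _ _ (fun S => by simp)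
  have hdouble : ∑ i ∈ Finset.univ, pen i * Zi i =
      2 * ∑ᶠ S ∈ {S : Set V | ∃ i, Separates s t i S}, setPenalty s t pen S * z S := by
    rw [hPP]
    have hstepA : ∀ i : Fin h, pen i * Zi i =
        ∑ S ∈ (Finset.univ : Finset (Set V)),
          (if Separates s t i S then pen i * z S else 0) := by
      intro i
      rw [hZi, Finset.mul_sum, ← Finset.sum_filter]
    have hstepC : ∀ S : Set V,
        (∑ i ∈ Finset.univ, if Separates s t i S then pen i * z S else 0) =
        (∑ i ∈ Finset.univ.filter (fun i : Fin h => Separates s t i S), pen i) * z S := by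
      intro S
      rw [Finset.sum_mul, ← Finset.sum_filter]
    calc ∑ i ∈ Finset.univ, pen i * Zi i
        = ∑ i ∈ Finset.univ, ∑ S ∈ (Finset.univ : Finset (Set V)),
            (if Separates s t i S then pen i * z S else 0) :=
          Finset.sum_congr rfl (fun i _ => hstepA i)
    _ = ∑ S ∈ (Finset.univ : Finset (Set V)), ∑ i ∈ Finset.univ,
            (if Separates s t i S then pen i * z S else 0) := Finset.sum_comm
    _ = ∑ S ∈ (Finset.univ : Finset (Set V)),
          (∑ i ∈ Finset.univ.filter (fun i : Fin h => Separates s t i S), pen i) * z S :=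
          Finset.sum_congr rfl (fun S _ => hstepC S)
    _ = ∑ S ∈ Finset.univ.filter (fun S : Set V => ∃ i, Separates s t i S),
          (∑ i ∈ Finset.univ.filter (fun i : Fin h => Separates s t i S), pen i) * z S := by
          symm
          apply Finset.sum_subset (Finset.filter_subset _ _)
          intro S _ hS
          simp only [Finset.mem_filter, Finset.mem_univ, true_and] at hS
          have hempty : Finset.univ.filter (fun i : Fin h => Separates s t i S) = ∅ := by
            rw [Finset.filter_eq_empty_iff]
            intro i _
            exact fun hi => hS ⟨i, hi⟩
          rw [hempty, Finset.sum_empty, zero_mul]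
    _ = ∑ S ∈ Finset.univ.filter (fun S : Set V => ∃ i, Separates s t i S),
          2 * (setPenalty s t pen S * z S) := by
          refine Finset.sum_congr rfl (fun S _ => ?_)
          rw [hsetPen S]
          ring
    _ = 2 * ∑ S ∈ Finset.univ.filter (fun S : Set V => ∃ i, Separates s t i S),
          setPenalty s t pen S * z S := by rw [Finset.mul_sum]
  -- identify the LP cost with L
  have hLR : (∑ᶠ v ∈ {v : V | v ∉ TT}, c v * x v) = L := by
    rw [finsum_mem_eq_finset (fun v => c v * x v) _ (Finset.univ.filter
      (fun v : V => v ∉ TT)) (fun v => by simp), hLdef]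
    refine Finset.sum_subset (Finset.filter_subset _ _) (fun v _ hv => ?_)
    simp only [Finset.mem_filter, Finset.mem_univ, true_and, not_not] at hv
    rw [hcT v hv, zero_mul]
  -- the budget identity
  have hHsplit : H = 1 + ∑ j ∈ Finset.Ioc 1 (2*h), (1:ℝ)/j := by
    rw [hHdef, ← Finset.Ioc_insert_left (by omega : (1:ℕ) ≤ 2*h),
      Finset.sum_insert Finset.left_notMem_Ioc]
    norm_num
  have hbud : 2*(L/β)*(∑ j ∈ Finset.Ioc 1 (2*h), (1:ℝ)/j) = 2*L*H := by
    have hS : (∑ j ∈ Finset.Ioc 1 (2*h), (1:ℝ)/j) = H - 1 := by linarith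
    have hne2 : H - 1 ≠ 0 := by intro hq; linarith
    have hb : (1:ℝ) - 1/H = (H-1)/H := by field_simp
    rw [hS, hβdef, hb, div_div_eq_mul_div, mul_assoc, div_mul_cancel₀ _ hne2]
    ring
  -- choose a minimizer and conclude via ε → 0
  obtain ⟨Xm, hXmm, hXmmin⟩ := Finset.exists_min_image (Finset.univ : Finset (Set V))
    (pcsf G s t c pen) ⟨∅, Finset.mem_univ ∅⟩
  refine ⟨Xm, le_of_forall_pos_le_add ?_⟩
  intro ε' hε'
  have hhp : (0:ℝ) < (h:ℝ) := by
    have : (0:ℕ) < h := by omega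
    exact_mod_cast this
  set ε : ℝ := ε' / (4*h) with hεdef
  have hεpos : 0 < ε := by
    rw [hεdef]
    exact div_pos hε' (by linarith)
  obtain ⟨X', hTX', hA0, hcost⟩ := PCSFAux.grow hh s t E xx
    (fun v => ENNReal.ofReal_ne_top) c hc β L ε hβpos hL0 hεpos hsepE hxc
    (2*h) TT hTTmem hcard2h
  -- cost part
  have hcsum : (∑ᶠ v ∈ X', c v) ≤ 2*L*H + 4*(h:ℝ)*ε := by
    rw [finsum_mem_eq_finset c X' (Finset.univ.filter (fun v : V => v ∈ X'))
      (fun v => by simp)]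
    have hsplit : Finset.univ.filter (fun v : V => v ∈ X') =
        Finset.univ.filter (fun v : V => v ∈ X' ∧ v ∈ TT) ∪
        Finset.univ.filter (fun v : V => v ∈ X' ∧ v ∉ TT) := by
      ext v
      simp only [Finset.mem_filter, Finset.mem_union, Finset.mem_univ, true_and]
      tauto
    have hdisj : Disjoint (Finset.univ.filter (fun v : V => v ∈ X' ∧ v ∈ TT))
        (Finset.univ.filter (fun v : V => v ∈ X' ∧ v ∉ TT)) := by
      rw [Finset.disjoint_left]
      intro v h1 h2
      exact (Finset.mem_filter.1 h2).2.2 (Finset.mem_filter.1 h1).2.2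
    rw [hsplit, Finset.sum_union hdisj]
    have h0 : ∑ v ∈ Finset.univ.filter (fun v : V => v ∈ X' ∧ v ∈ TT), c v = 0 :=
      Finset.sum_eq_zero (fun v hv => hcT v (Finset.mem_filter.1 hv).2.2)
    rw [h0, zero_add]
    calc ∑ v ∈ Finset.univ.filter (fun v : V => v ∈ X' ∧ v ∉ TT), c v
        ≤ 2 * (L / β) * (∑ j ∈ Finset.Ioc 1 (2*h), (1:ℝ)/j) + 2 * ((2*h : ℕ):ℝ) * ε := by
          refine le_trans (le_of_eq ?_) hcost
          refine Finset.sum_congr ?_ (fun _ _ => rfl)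
          ext v
          simp [Finset.mem_filter]
    _ = 2*L*H + 4*(h:ℝ)*ε := by
          rw [hbud]
          push_cast
          ring
  -- penalty part
  have hAIdxe : PCSFAux.AIdx G s t E X' = ∅ :=
    Finset.image_eq_empty.1 (Finset.card_eq_zero.1 hA0)
  have hZge : ∀ i : Fin h, ¬ Satisfies G s t X' i → 1/H ≤ Zi i := by
    intro i hi
    by_contra hlt
    push_neg at hlt
    have hmem : (Sum.inl i : Fin h ⊕ Fin h) ∈ PCSFAux.AIdx G s t E X' := by
      rw [PCSFAux.AIdx, Finset.mem_filter]
      exact ⟨Finset.mem_univ _, hlt, hi⟩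
    rw [hAIdxe] at hmem
    exact absurd hmem (Finset.notMem_empty _)
  have hpenb : (∑ᶠ i ∈ {i : Fin h | ¬ Satisfies G s t X' i}, pen i) ≤
      H * ∑ i ∈ Finset.univ, pen i * Zi i := by
    rw [finsum_mem_eq_finset pen _ (Finset.univ.filter
      (fun i : Fin h => ¬ Satisfies G s t X' i)) (fun i => by simp)]
    calc ∑ i ∈ Finset.univ.filter (fun i : Fin h => ¬ Satisfies G s t X' i), pen i
        ≤ ∑ i ∈ Finset.univ.filter (fun i : Fin h => ¬ Satisfies G s t X' i),
            H * (pen i * Zi i) := by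
          refine Finset.sum_le_sum (fun i hi => ?_)
          have hiu : ¬ Satisfies G s t X' i := (Finset.mem_filter.1 hi).2
          have hZ := hZge i hiu
          have h1 : 1 ≤ H * Zi i := by
            calc (1:ℝ) = H * (1/H) := by field_simp
            _ ≤ H * Zi i := mul_le_mul_of_nonneg_left hZ hH0.le
          calc pen i = pen i * 1 := by ring
          _ ≤ pen i * (H * Zi i) := mul_le_mul_of_nonneg_left h1 (hpen i)
          _ = H * (pen i * Zi i) := by ring
    _ ≤ ∑ i ∈ Finset.univ, H * (pen i * Zi i) :=
          Finset.sum_le_sum_of_subset_of_nonneg (Finset.filter_subset _ _)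
            (fun i _ _ => mul_nonneg hH0.le (mul_nonneg (hpen i) (hZnonneg i)))
    _ = H * ∑ i ∈ Finset.univ, pen i * Zi i := by rw [Finset.mul_sum]
  rw [hdouble] at hpenb
  -- conclude
  have hXm : pcsf G s t c pen Xm ≤ pcsf G s t c pen X' := hXmmin X' (Finset.mem_univ X')
  have hpc : pcsf G s t c pen X' =
      (∑ᶠ v ∈ X', c v) + ∑ᶠ i ∈ {i : Fin h | ¬ Satisfies G s t X' i}, pen i := rfl
  have h4h : 4*(h:ℝ)*ε = ε' := by
    rw [hεdef]
    field_simp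
  calc pcsf G s t c pen Xm ≤ pcsf G s t c pen X' := hXm
  _ = (∑ᶠ v ∈ X', c v) + ∑ᶠ i ∈ {i : Fin h | ¬ Satisfies G s t X' i}, pen i := hpc
  _ ≤ (2*L*H + 4*(h:ℝ)*ε) +
      H * (2 * ∑ᶠ S ∈ {S : Set V | ∃ i, Separates s t i S}, setPenalty s t pen S * z S) :=
        add_le_add hcsum hpenb
  _ = 2 * H * (L + ∑ᶠ S ∈ {S : Set V | ∃ i, Separates s t i S},
        setPenalty s t pen S * z S) + ε' := by rw [← h4h]; ring
  _ = 2 * H * ((∑ᶠ v ∈ {v : V | v ∉ TT}, c v * x v) +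
        ∑ᶠ S ∈ {S : Set V | ∃ i, Separates s t i S}, setPenalty s t pen S * z S) + ε' := by
        rw [hLR]
end

section
/- Let G = (V,E) be a finite simple undirected graph with vertex costs c : V → ℝ≥0, terminal set T ⊆ V, n = |V|, and an integer k with 1 ≤ k ≤ |T|. Form G' from G by adding, for each terminal t ∈ T, n new vertices of cost 0 each adjacent only to t. If G contains a tree with at least k terminals of T, then the minimum cost of a tree in G' with at least kn + k vertices equals the minimum cost of a tree in G containing at least k terminals of T. -/
open scoped Classical

open SimpleGraph

section Generic

variable {X Y : Type*}

/-- A vertex with at most one neighbour lies on no cycle. -/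
lemma cycle_not_mem_support {W : SimpleGraph X} {x : X}
    (hx : ∀ y z, W.Adj x y → W.Adj x z → y = z)
    {a : X} {p : W.Walk a a} (hp : p.IsCycle) : x ∉ p.support := by
  intro hmem
  have hq : (p.rotate x hmem).IsCycle := hp.rotate hmem
  set q := p.rotate x hmem with hqdef
  have hq3 := hq.three_le_length
  have hnn : ¬ q.Nil := by
    rw [SimpleGraph.Walk.nil_iff_length_eq]; omega
  obtain ⟨y, h1, q1, hq1⟩ := SimpleGraph.Walk.not_nil_iff.mp hnn
  rw [hq1, SimpleGraph.Walk.cons_isCycle_iff] at hq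
  obtain ⟨hq1path, hq1e⟩ := hq
  have hlen : 2 ≤ q1.length := by
    rw [hq1] at hq3; simp [SimpleGraph.Walk.length_cons] at hq3; omega
  have hnn2 : ¬ q1.reverse.Nil := by
    rw [SimpleGraph.Walk.nil_iff_length_eq, SimpleGraph.Walk.length_reverse]; omega
  obtain ⟨z, h2, q2, hq2⟩ := SimpleGraph.Walk.not_nil_iff.mp hnn2
  have hz : z = y := hx z y h2 h1
  have hmem2 : s(x, z) ∈ q1.reverse.edges := by rw [hq2]; simp
  rw [SimpleGraph.Walk.edges_reverse, List.mem_reverse] at hmem2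
  subst hz
  exact hq1e hmem2

/-- Lift a walk in `map f A` to a walk in `A`. -/
lemma exists_walk_of_map {A : SimpleGraph X} (f : X ↪ Y) :
    ∀ {x y : Y} (p : (SimpleGraph.map f A).Walk x y) {u v : X}, f u = x → f v = y →
      ∃ q : A.Walk u v, q.support.map f = p.support ∧
        q.edges.map (Sym2.map f) = p.edges := by
  intro x y p
  induction p with
  | nil =>
    intro u v hu hv
    cases f.injective (hu.trans hv.symm)
    exact ⟨.nil, by simp [hu], by simp⟩
  | @cons x' z' y' h p ih =>
    intro u v hu hv
    rw [SimpleGraph.map_adj] at h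
    obtain ⟨a, b, hab, ha, hb⟩ := h
    have hau : a = u := f.injective (ha.trans hu.symm)
    subst hau
    obtain ⟨q, hs, he⟩ := ih (u := b) (v := v) hb hv
    refine ⟨.cons hab q, ?_, ?_⟩
    · simp [hs, hu]
    · simp [he, Sym2.map_pair_eq, hu, hb]

lemma isAcyclic_map {A : SimpleGraph X} (hA : A.IsAcyclic) (f : X ↪ Y) :
    (SimpleGraph.map f A).IsAcyclic := by
  intro y p hp
  have h3 := hp.three_le_length
  have hnn : ¬ p.Nil := by rw [SimpleGraph.Walk.nil_iff_length_eq]; omega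
  obtain ⟨z, h, p', hp'⟩ := SimpleGraph.Walk.not_nil_iff.mp hnn
  have h' := h
  rw [SimpleGraph.map_adj] at h'
  obtain ⟨a, b, hab, ha, hb⟩ := h'
  obtain ⟨q, hs, he⟩ := exists_walk_of_map f p (u := a) (v := a) ha ha
  refine hA q ?_
  rw [SimpleGraph.Walk.isCycle_def]
  refine ⟨?_, ?_, ?_⟩
  · rw [SimpleGraph.Walk.isTrail_def]
    have := hp.isTrail.edges_nodup
    rw [← he] at this
    exact this.of_map _
  · intro hqnil
    subst hqnil
    simp at he
    have hpl : p.edges.length = p.length := p.length_edges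
    rw [SimpleGraph.Walk.nil_iff_length_eq] at he
    omega
  · have hnd := hp.support_nodup
    have : p.support.tail = q.support.tail.map f := by
      rw [← hs, List.map_tail]
    rw [this] at hnd
    exact hnd.of_map _


/-- Acyclicity criterion: vertices outside the range of `f` have at most one neighbour,
and edges within the range come from the acyclic graph `A`. -/
lemma isAcyclic_of_cover {A : SimpleGraph X} {B : SimpleGraph Y} (f : X ↪ Y)
    (hA : A.IsAcyclic)
    (hadj : ∀ x y, B.Adj x y → x ∈ Set.range f → y ∈ Set.range f →
      (SimpleGraph.map f A).Adj x y)
    (hdeg : ∀ x, x ∉ Set.range f → ∀ y z, B.Adj x y → B.Adj x z → y = z) :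
    B.IsAcyclic := by
  intro a p hp
  have hsup : ∀ x ∈ p.support, x ∈ Set.range f := by
    intro x hxs
    by_contra hxr
    exact cycle_not_mem_support (hdeg x hxr) hp hxs
  have hedges : ∀ e ∈ p.edges, e ∈ (SimpleGraph.map f A).edgeSet := by
    intro e he
    induction e with
    | _ x y =>
      have hBxy : B.Adj x y := p.adj_of_mem_edges he
      exact (hadj x y hBxy (hsup x (p.fst_mem_support_of_mem_edges he))
        (hsup y (p.snd_mem_support_of_mem_edges he)))
  exact isAcyclic_map hA f (p.transfer _ hedges) (hp.transfer hedges)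

end Generic

/-- The graph `G'` obtained from `G` by adding, for each terminal `t ∈ T`,
`n` new vertices each adjacent only to `t`. -/
def Gext {V : Type*} (G : SimpleGraph V) (T : Set V) (n : ℕ) :
    SimpleGraph (V ⊕ (T × Fin n)) :=
  SimpleGraph.fromRel (fun a b =>
    match a, b with
    | Sum.inl u, Sum.inl v => G.Adj u v
    | Sum.inl u, Sum.inr p => u = (p.1 : V)
    | _, _ => False)

section Main

variable {V : Type*} {G : SimpleGraph V} {T : Set V} {n : ℕ}

lemma gext_adj_inl_inl {u v : V} :
    (Gext G T n).Adj (Sum.inl u) (Sum.inl v) ↔ G.Adj u v := by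
  constructor
  · rintro ⟨hne, h | h⟩
    · exact h
    · exact h.symm
  · intro h
    exact ⟨by simp [h.ne], Or.inl h⟩

lemma gext_adj_inl_inr {u : V} {p : ↥T × Fin n} :
    (Gext G T n).Adj (Sum.inl u) (Sum.inr p) ↔ u = ↑p.1 := by
  constructor
  · rintro ⟨hne, h | h⟩
    · exact h
    · exact h.elim
  · intro h
    exact ⟨by simp, Or.inl h⟩

lemma gext_adj_inr {p : ↥T × Fin n} {x : V ⊕ (↥T × Fin n)} :
    (Gext G T n).Adj (Sum.inr p) x → x = Sum.inl ↑p.1 := by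
  cases x with
  | inl u =>
    intro h
    have := gext_adj_inl_inr.mp h.symm
    simp [this]
  | inr q =>
    rintro ⟨hne, h | h⟩ <;> exact h.elim


/-- The inclusion homomorphism `G →g Gext G T n`. -/
def finl (G : SimpleGraph V) (T : Set V) (n : ℕ) : G →g Gext G T n where
  toFun := Sum.inl
  map_rel' := fun h => gext_adj_inl_inl.mpr h

lemma pend_adj (p : ↥T × Fin n) :
    (Gext G T n).Adj (Sum.inl ↑p.1) (Sum.inr p) := gext_adj_inl_inr.mpr rfl

/-- Extension of a subgraph of `G` by all pendant vertices over terminals in `S`. -/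
noncomputable def Hext (G : SimpleGraph V) (T : Set V) (n : ℕ) (H : G.Subgraph) (S : Set V) :
    (Gext G T n).Subgraph :=
  SimpleGraph.Subgraph.map (finl G T n) H ⊔
    ⨆ p ∈ {p : ↥T × Fin n | ↑p.1 ∈ S}, (Gext G T n).subgraphOfAdj (pend_adj p)

lemma hext_verts {H : G.Subgraph} {S : Set V} (hSH : S ⊆ H.verts) :
    (Hext G T n H S).verts =
      Sum.inl '' H.verts ∪ Sum.inr '' {p : ↥T × Fin n | ↑p.1 ∈ S} := by
  ext x
  simp only [Hext, SimpleGraph.Subgraph.verts_sup, SimpleGraph.Subgraph.map_verts,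
    SimpleGraph.Subgraph.verts_iSup, Set.mem_union, Set.mem_iUnion,
    SimpleGraph.subgraphOfAdj_verts, Set.mem_insert_iff, Set.mem_singleton_iff,
    Set.mem_image, Set.mem_setOf_eq]
  constructor
  · rintro (h | ⟨p, hp, (rfl | rfl)⟩)
    · exact Or.inl h
    · exact Or.inl ⟨↑p.1, hSH hp, rfl⟩
    · exact Or.inr ⟨p, hp, rfl⟩
  · rintro (h | ⟨p, hp, rfl⟩)
    · exact Or.inl h
    · exact Or.inr ⟨p, hp, Or.inr rfl⟩

lemma hext_adj {H : G.Subgraph} {S : Set V} {x y : V ⊕ (↥T × Fin n)} :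
    (Hext G T n H S).Adj x y ↔
      (∃ u v, H.Adj u v ∧ x = Sum.inl u ∧ y = Sum.inl v) ∨
      (∃ p : ↥T × Fin n, ↑p.1 ∈ S ∧
        ((x = Sum.inl ↑p.1 ∧ y = Sum.inr p) ∨ (x = Sum.inr p ∧ y = Sum.inl ↑p.1))) := by
  simp only [Hext, SimpleGraph.Subgraph.sup_adj, SimpleGraph.Subgraph.map_adj,
    Relation.Map, SimpleGraph.Subgraph.iSup_adj, SimpleGraph.subgraphOfAdj_adj,
    Set.mem_setOf_eq]
  constructor
  · rintro (⟨u, v, h, rfl, rfl⟩ | ⟨p, hp, h⟩)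
    · exact Or.inl ⟨u, v, h, rfl, rfl⟩
    · refine Or.inr ⟨p, hp, ?_⟩
      rw [Sym2.eq_iff] at h
      tauto
  · rintro (⟨u, v, h, rfl, rfl⟩ | ⟨p, hp, (⟨rfl, rfl⟩ | ⟨rfl, rfl⟩)⟩)
    · exact Or.inl ⟨u, v, h, rfl, rfl⟩
    · exact Or.inr ⟨p, hp, by rw [Sym2.eq_iff]; tauto⟩
    · exact Or.inr ⟨p, hp, by rw [Sym2.eq_iff]; tauto⟩


lemma star_le {H : G.Subgraph} {S : Set V} {p : ↥T × Fin n}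
    (hp : p ∈ {p : ↥T × Fin n | ↑p.1 ∈ S}) :
    (Gext G T n).subgraphOfAdj (pend_adj p) ≤ Hext G T n H S :=
  le_trans (le_iSup₂ (f := fun (p : ↥T × Fin n) (_ : p ∈ {p : ↥T × Fin n | ↑p.1 ∈ S}) =>
    (Gext G T n).subgraphOfAdj (pend_adj p)) p hp) le_sup_right

lemma hext_connected {H : G.Subgraph} {S : Set V} (hSH : S ⊆ H.verts)
    (hconn : H.coe.Connected) : (Hext G T n H S).Connected := by
  have hHc : SimpleGraph.Subgraph.Connected H := SimpleGraph.Subgraph.connected_iff'.mpr hconn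
  rw [SimpleGraph.Subgraph.connected_iff_forall_exists_walk_subgraph] at hHc ⊢
  obtain ⟨⟨v0, hv0⟩, hHwalk⟩ := hHc
  have hvertsle : ∀ u ∈ H.verts, Sum.inl u ∈ (Hext G T n H S).verts := by
    intro u hu
    rw [hext_verts hSH]
    exact Or.inl ⟨u, hu, rfl⟩
  -- every vertex is connected inside Hext to `inl` of some vertex of `H`
  have key : ∀ x ∈ (Hext G T n H S).verts, ∃ u, u ∈ H.verts ∧
      ∃ w : (Gext G T n).Walk x (Sum.inl u), w.toSubgraph ≤ Hext G T n H S := by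
    intro x hx
    rw [hext_verts hSH] at hx
    rcases hx with ⟨u, hu, rfl⟩ | ⟨p, hp, rfl⟩
    · refine ⟨u, hu, SimpleGraph.Walk.nil, ?_⟩
      simp only [SimpleGraph.Walk.toSubgraph]
      rw [SimpleGraph.singletonSubgraph_le_iff]
      exact hvertsle u hu
    · refine ⟨↑p.1, hSH hp, SimpleGraph.Walk.cons (pend_adj p).symm SimpleGraph.Walk.nil, ?_⟩
      rw [SimpleGraph.Walk.toSubgraph_cons_nil_eq_subgraphOfAdj,
        SimpleGraph.subgraphOfAdj_symm]
      exact star_le hp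
  -- walks between `inl` vertices
  have hinl : ∀ u v, u ∈ H.verts → v ∈ H.verts →
      ∃ w : (Gext G T n).Walk (Sum.inl u) (Sum.inl v), w.toSubgraph ≤ Hext G T n H S := by
    intro u v hu hv
    obtain ⟨w, hw⟩ := hHwalk hu hv
    refine ⟨w.map (finl G T n), ?_⟩
    refine le_trans (le_of_eq (SimpleGraph.Walk.toSubgraph_map (finl G T n) w)) ?_
    exact le_trans (SimpleGraph.Subgraph.map_mono hw) le_sup_left
  refine ⟨⟨Sum.inl v0, hvertsle v0 hv0⟩, ?_⟩
  intro x y hx hy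
  obtain ⟨u, hu, wx, hwx⟩ := key x hx
  obtain ⟨v, hv, wy, hwy⟩ := key y hy
  obtain ⟨wm, hwm⟩ := hinl u v hu hv
  refine ⟨(wx.append wm).append wy.reverse, ?_⟩
  rw [SimpleGraph.Walk.toSubgraph_append, SimpleGraph.Walk.toSubgraph_append,
    SimpleGraph.Walk.toSubgraph_reverse]
  exact sup_le (sup_le hwx hwm) hwy


lemma hext_isTree {H : G.Subgraph} {S : Set V} (hSH : S ⊆ H.verts)
    (htree : H.coe.IsTree) : (Hext G T n H S).coe.IsTree := by
  constructor
  · exact (hext_connected hSH htree.isConnected).coe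
  · have hf : Function.Injective (fun a : ↥H.verts =>
        (⟨Sum.inl ↑a, by rw [hext_verts hSH]; exact Or.inl ⟨↑a, a.2, rfl⟩⟩ : ↥(Hext G T n H S).verts)) := by
      intro a b hab
      simp only [Subtype.mk_eq_mk, Sum.inl.injEq] at hab
      exact Subtype.ext hab
    set f : ↥H.verts ↪ ↥(Hext G T n H S).verts :=
      ⟨fun a => ⟨Sum.inl ↑a, by rw [hext_verts hSH]; exact Or.inl ⟨↑a, a.2, rfl⟩⟩, hf⟩ with hfdef
    have hrange : ∀ x : ↥(Hext G T n H S).verts,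
        x ∈ Set.range f ↔ ∃ u ∈ H.verts, (x : V ⊕ (↥T × Fin n)) = Sum.inl u := by
      intro x
      constructor
      · rintro ⟨a, rfl⟩
        exact ⟨↑a, a.2, rfl⟩
      · rintro ⟨u, hu, hx⟩
        exact ⟨⟨u, hu⟩, Subtype.ext hx.symm⟩
    apply isAcyclic_of_cover f htree.IsAcyclic
    · rintro x y hadj hx hy
      rw [hrange] at hx hy
      obtain ⟨u, hu, hxu⟩ := hx
      obtain ⟨v, hv, hyv⟩ := hy
      have hadj' : (Hext G T n H S).Adj ↑x ↑y := hadj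
      rw [hext_adj] at hadj'
      rcases hadj' with ⟨u', v', h, hx', hy'⟩ | ⟨p, hp, (⟨hx', hy'⟩ | ⟨hx', hy'⟩)⟩
      · rw [hxu] at hx'
        rw [hyv] at hy'
        rw [SimpleGraph.map_adj]
        refine ⟨⟨u, hu⟩, ⟨v, hv⟩, ?_, Subtype.ext hxu.symm, Subtype.ext hyv.symm⟩
        have h1 : u = u' := Sum.inl_injective hx'
        have h2 : v = v' := Sum.inl_injective hy'
        subst h1
        subst h2
        exact h
      · rw [hyv] at hy'
        exact absurd hy' (by simp)
      · rw [hxu] at hx'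
        exact absurd hx' (by simp)
    · rintro x hx y z hxy hxz
      have hx' : ¬ ∃ u ∈ H.verts, (x : V ⊕ (↥T × Fin n)) = Sum.inl u := by
        rw [← hrange]; exact hx
      have hadjy : (Hext G T n H S).Adj ↑x ↑y := hxy
      have hadjz : (Hext G T n H S).Adj ↑x ↑z := hxz
      obtain ⟨xv, hxv⟩ : ∃ xv, (x : V ⊕ (↥T × Fin n)) = xv := ⟨_, rfl⟩
      cases xv with
      | inl u =>
        exfalso
        apply hx'
        refine ⟨u, ?_, hxv⟩
        rw [hxv] at hadjy
        rw [hext_adj] at hadjy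
        rcases hadjy with ⟨u', v', h, hx'', _⟩ | ⟨p, hp, (⟨hx'', _⟩ | ⟨hx'', _⟩)⟩
        · have : u = u' := Sum.inl_injective hx''
          rw [this]
          exact h.fst_mem
        · have : u = ↑p.1 := Sum.inl_injective hx''
          rw [this]
          exact hSH hp
        · exact absurd hx'' (by simp)
      | inr p =>
        have h1 : (y : V ⊕ (↥T × Fin n)) = Sum.inl ↑p.1 := by
          apply gext_adj_inr
          rw [← hxv]
          exact (Hext G T n H S).adj_sub hadjy
        have h2 : (z : V ⊕ (↥T × Fin n)) = Sum.inl ↑p.1 := by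
          apply gext_adj_inr
          rw [← hxv]
          exact (Hext G T n H S).adj_sub hadjz
        exact Subtype.ext (h1.trans h2.symm)


lemma ncard_pend (A : Set V) :
    {p : ↥T × Fin n | ↑p.1 ∈ A}.ncard = (A ∩ T).ncard * n := by
  have e : ↥{p : ↥T × Fin n | ↑p.1 ∈ A} ≃ ↥(A ∩ T) × Fin n :=
    { toFun := fun x => (⟨↑x.1.1, ⟨x.2, x.1.1.2⟩⟩, x.1.2)
      invFun := fun y => ⟨(⟨↑y.1, y.1.2.2⟩, y.2), y.1.2.1⟩
      left_inv := fun x => rfl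
      right_inv := fun y => rfl }
  calc {p : ↥T × Fin n | ↑p.1 ∈ A}.ncard
      = Nat.card ↥{p : ↥T × Fin n | ↑p.1 ∈ A} := (Nat.card_coe_set_eq _).symm
    _ = Nat.card (↥(A ∩ T) × Fin n) := Nat.card_congr e
    _ = Nat.card ↥(A ∩ T) * Nat.card (Fin n) := Nat.card_prod _ _
    _ = (A ∩ T).ncard * n := by
        rw [Nat.card_coe_set_eq, Nat.card_eq_fintype_card, Fintype.card_fin]

lemma hext_verts_ncard [Fintype V] {H : G.Subgraph} {S : Set V} (hSH : S ⊆ H.verts)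
    (hST : S ⊆ T) :
    (Hext G T n H S).verts.ncard = H.verts.ncard + S.ncard * n := by
  rw [hext_verts hSH]
  have hdisj : Disjoint (Sum.inl '' H.verts)
      (Sum.inr '' {p : ↥T × Fin n | ↑p.1 ∈ S} :
        Set (V ⊕ (↥T × Fin n))) := by
    rw [Set.disjoint_left]
    rintro a ⟨u, _, rfl⟩ ⟨p, _, h⟩
    exact Sum.inl_ne_inr h.symm
  rw [Set.ncard_union_eq hdisj (Set.toFinite _) (Set.toFinite _),
    Set.ncard_image_of_injective _ Sum.inl_injective,
    Set.ncard_image_of_injective _ Sum.inr_injective,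
    ncard_pend, Set.inter_eq_self_of_subset_left hST]

lemma hext_cost [Fintype V] {H : G.Subgraph} {S : Set V} (hSH : S ⊆ H.verts) (c : V → ℝ) :
    ∑ᶠ v ∈ (Hext G T n H S).verts, Sum.elim c (fun _ => (0 : ℝ)) v =
      ∑ᶠ v ∈ H.verts, c v := by
  rw [hext_verts hSH]
  have hdisj : Disjoint (Sum.inl '' H.verts)
      (Sum.inr '' {p : ↥T × Fin n | ↑p.1 ∈ S} :
        Set (V ⊕ (↥T × Fin n))) := by
    rw [Set.disjoint_left]
    rintro a ⟨u, _, rfl⟩ ⟨p, _, h⟩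
    exact Sum.inl_ne_inr h.symm
  rw [finsum_mem_union hdisj (Set.toFinite _) (Set.toFinite _)]
  have h1 : ∑ᶠ v ∈ (Sum.inl '' H.verts : Set (V ⊕ (↥T × Fin n))),
      Sum.elim c (fun _ => (0 : ℝ)) v = ∑ᶠ v ∈ H.verts, c v := by
    rw [finsum_mem_image (Sum.inl_injective.injOn)]
    rfl
  have h2 : ∑ᶠ v ∈ (Sum.inr '' {p : ↥T × Fin n | ↑p.1 ∈ S} : Set (V ⊕ (↥T × Fin n))),
      Sum.elim c (fun _ => (0 : ℝ)) v = 0 := by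
    apply finsum_mem_of_eqOn_zero
    rintro x ⟨p, _, rfl⟩
    rfl
  rw [h1, h2, add_zero]


/-- Restriction of a subgraph of `Gext G T n` to the original vertices. -/
def Rest (G : SimpleGraph V) (T : Set V) (n : ℕ) (H' : (Gext G T n).Subgraph) : G.Subgraph where
  verts := {v : V | Sum.inl v ∈ H'.verts}
  Adj u v := H'.Adj (Sum.inl u) (Sum.inl v)
  adj_sub h := gext_adj_inl_inl.mp (H'.adj_sub h)
  edge_vert h := h.fst_mem
  symm := ⟨fun u v h => h.symm⟩

lemma pend_closed {H' : (Gext G T n).Subgraph} (hconn : H'.coe.Connected)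
    (hcard : 2 ≤ H'.verts.ncard) {p : ↥T × Fin n} (hp : Sum.inr p ∈ H'.verts) :
    Sum.inl (↑p.1 : V) ∈ H'.verts := by
  have h2 : 1 < H'.verts.ncard := hcard
  obtain ⟨y, hy, hyne⟩ := Set.exists_ne_of_one_lt_ncard h2 (Sum.inr p)
  have hHc : SimpleGraph.Subgraph.Connected H' := SimpleGraph.Subgraph.connected_iff'.mpr hconn
  rw [SimpleGraph.Subgraph.connected_iff_forall_exists_walk_subgraph] at hHc
  obtain ⟨w, hw⟩ := hHc.2 hp hy
  cases w with
  | nil => exact absurd rfl hyne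
  | @cons _ z _ h q =>
    have hz : z = Sum.inl ↑p.1 := gext_adj_inr h
    subst hz
    rw [SimpleGraph.Walk.toSubgraph] at hw
    have := le_trans le_sup_left hw
    have hadj0 : ((Gext G T n).subgraphOfAdj h).Adj (Sum.inr p) (Sum.inl ↑p.1) := by
      simp
    have hadj : H'.Adj (Sum.inr p) (Sum.inl ↑p.1) := this.2 hadj0
    exact hadj.snd_mem


lemma rest_walk {H' : (Gext G T n).Subgraph} :
    ∀ (N : ℕ) {u v : V} (w : (Gext G T n).Walk (Sum.inl u) (Sum.inl v)),
      w.length ≤ N → w.toSubgraph ≤ H' →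
      ∃ q : G.Walk u v, q.toSubgraph ≤ Rest G T n H' := by
  intro N
  induction N with
  | zero =>
    intro u v w hlen hle
    cases w with
    | nil =>
      refine ⟨SimpleGraph.Walk.nil, ?_⟩
      rw [SimpleGraph.Walk.toSubgraph, SimpleGraph.singletonSubgraph_le_iff]
      have := hle
      rw [SimpleGraph.Walk.toSubgraph, SimpleGraph.singletonSubgraph_le_iff] at this
      exact this
    | cons h q => simp [SimpleGraph.Walk.length_cons] at hlen
  | succ N ih =>
    intro u v w hlen hle
    cases w with
    | nil =>
      refine ⟨SimpleGraph.Walk.nil, ?_⟩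
      rw [SimpleGraph.Walk.toSubgraph, SimpleGraph.singletonSubgraph_le_iff]
      rw [SimpleGraph.Walk.toSubgraph, SimpleGraph.singletonSubgraph_le_iff] at hle
      exact hle
    | @cons _ z _ h w' =>
      rw [SimpleGraph.Walk.toSubgraph] at hle
      have hle1 := le_trans le_sup_left hle
      have hle2 := le_trans le_sup_right hle
      cases z with
      | inl u' =>
        have hadj : H'.Adj (Sum.inl u) (Sum.inl u') := hle1.2 (by simp)
        have hlen' : w'.length ≤ N := by
          rw [SimpleGraph.Walk.length_cons] at hlen; omega
        obtain ⟨q, hq⟩ := ih w' hlen' hle2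
        refine ⟨SimpleGraph.Walk.cons (gext_adj_inl_inl.mp (H'.adj_sub hadj)) q, ?_⟩
        rw [SimpleGraph.Walk.toSubgraph]
        refine sup_le ?_ hq
        have : (Rest G T n H').Adj u u' := hadj
        exact SimpleGraph.subgraphOfAdj_le_of_adj _ this
      | inr p =>
        have hup : u = ↑p.1 := gext_adj_inl_inr.mp h
        cases w' with
        | @cons _ z2 _ h2 w2 =>
          have hz2 : z2 = Sum.inl ↑p.1 := gext_adj_inr h2
          subst hz2
          rw [SimpleGraph.Walk.toSubgraph] at hle2
          have hle3 := le_trans le_sup_right hle2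
          have hlen2 : w2.length ≤ N := by
            simp [SimpleGraph.Walk.length_cons] at hlen ⊢; omega
          subst hup
          exact ih w2 hlen2 hle3


lemma exists_inl {H' : (Gext G T n).Subgraph} (hconn : H'.coe.Connected)
    (hcard : 2 ≤ H'.verts.ncard) : ∃ u, Sum.inl u ∈ H'.verts := by
  have hne : H'.verts.Nonempty := by
    apply Set.nonempty_of_ncard_ne_zero; omega
  obtain ⟨x, hx⟩ := hne
  cases x with
  | inl u => exact ⟨u, hx⟩
  | inr p => exact ⟨↑p.1, pend_closed hconn hcard hx⟩

lemma rest_isTree {H' : (Gext G T n).Subgraph} (htree : H'.coe.IsTree)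
    (hcard : 2 ≤ H'.verts.ncard) : (Rest G T n H').coe.IsTree := by
  have hconn := htree.isConnected
  constructor
  · -- connectivity
    have hHc : SimpleGraph.Subgraph.Connected H' :=
      SimpleGraph.Subgraph.connected_iff'.mpr hconn
    rw [SimpleGraph.Subgraph.connected_iff_forall_exists_walk_subgraph] at hHc
    have : SimpleGraph.Subgraph.Connected (Rest G T n H') := by
      rw [SimpleGraph.Subgraph.connected_iff_forall_exists_walk_subgraph]
      obtain ⟨u0, hu0⟩ := exists_inl hconn hcard
      refine ⟨⟨u0, hu0⟩, ?_⟩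
      intro u v hu hv
      obtain ⟨w, hw⟩ := hHc.2 hu hv
      exact rest_walk w.length w le_rfl hw
    exact this.coe
  · -- acyclicity
    intro a p hp
    have hφadj : ∀ {x y : ↥(Rest G T n H').verts}, (Rest G T n H').coe.Adj x y →
        H'.coe.Adj ⟨Sum.inl ↑x, x.2⟩ ⟨Sum.inl ↑y, y.2⟩ := fun h => h
    let φ : (Rest G T n H').coe →g H'.coe :=
      ⟨fun x => ⟨Sum.inl ↑x, x.2⟩, hφadj⟩
    have hφinj : Function.Injective φ := by
      intro a b hab
      have hab' : (⟨Sum.inl ↑a, a.2⟩ : ↥H'.verts) = ⟨Sum.inl ↑b, b.2⟩ := hab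
      replace hab' := Sum.inl_injective (congrArg Subtype.val hab')
      exact Subtype.ext hab'
    exact htree.IsAcyclic (p.map φ) (hp.map hφinj)


lemma rest_card [Fintype V] {H' : (Gext G T n).Subgraph} (hconn : H'.coe.Connected)
    (hcard : 2 ≤ H'.verts.ncard) :
    H'.verts.ncard ≤ (Rest G T n H').verts.ncard +
      ((Rest G T n H').verts ∩ T).ncard * n := by
  have hsub : H'.verts ⊆ Sum.inl '' (Rest G T n H').verts ∪
      Sum.inr '' {p : ↥T × Fin n | ↑p.1 ∈ (Rest G T n H').verts} := by
    intro x hx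
    cases x with
    | inl u => exact Or.inl ⟨u, hx, rfl⟩
    | inr p => exact Or.inr ⟨p, pend_closed hconn hcard hx, rfl⟩
  calc H'.verts.ncard
      ≤ (Sum.inl '' (Rest G T n H').verts ∪
          Sum.inr '' {p : ↥T × Fin n | ↑p.1 ∈ (Rest G T n H').verts}).ncard :=
        Set.ncard_le_ncard hsub (Set.toFinite _)
    _ ≤ (Sum.inl '' (Rest G T n H').verts : Set (V ⊕ (↥T × Fin n))).ncard +
        (Sum.inr '' {p : ↥T × Fin n | ↑p.1 ∈ (Rest G T n H').verts} :
          Set (V ⊕ (↥T × Fin n))).ncard := Set.ncard_union_le _ _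
    _ = (Rest G T n H').verts.ncard +
        ((Rest G T n H').verts ∩ T).ncard * n := by
        rw [Set.ncard_image_of_injective _ Sum.inl_injective,
          Set.ncard_image_of_injective _ Sum.inr_injective, ncard_pend]

lemma rest_cost [Fintype V] {H' : (Gext G T n).Subgraph} (c : V → ℝ) :
    ∑ᶠ v ∈ H'.verts, Sum.elim c (fun _ => (0 : ℝ)) v =
      ∑ᶠ v ∈ (Rest G T n H').verts, c v := by
  have hsplit : H'.verts = Sum.inl '' (Rest G T n H').verts ∪
      (H'.verts ∩ Set.range Sum.inr) := by
    ext x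
    cases x with
    | inl u =>
      simp only [Set.mem_union, Set.mem_image, Set.mem_inter_iff, Set.mem_range]
      constructor
      · intro h; exact Or.inl ⟨u, h, rfl⟩
      · rintro (⟨u', hu', h⟩ | ⟨h, _⟩)
        · cases Sum.inl_injective h; exact hu'
        · exact h
    | inr p =>
      simp only [Set.mem_union, Set.mem_image, Set.mem_inter_iff, Set.mem_range]
      constructor
      · intro h; exact Or.inr ⟨h, p, rfl⟩
      · rintro (⟨u', _, h⟩ | ⟨h, _⟩)
        · exact absurd h (by simp)
        · exact h
  have hdisj : Disjoint (Sum.inl '' (Rest G T n H').verts : Set (V ⊕ (↥T × Fin n)))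
      (H'.verts ∩ Set.range Sum.inr) := by
    rw [Set.disjoint_left]
    rintro a ⟨u, _, rfl⟩ ⟨_, p, h⟩
    exact Sum.inl_ne_inr h.symm
  rw [hsplit, finsum_mem_union hdisj (Set.toFinite _) (Set.toFinite _),
    finsum_mem_image (Sum.inl_injective.injOn)]
  have h2 : ∑ᶠ v ∈ (H'.verts ∩ Set.range Sum.inr),
      Sum.elim c (fun _ => (0 : ℝ)) v = 0 := by
    apply finsum_mem_of_eqOn_zero
    rintro x ⟨_, p, rfl⟩
    rfl
  rw [h2, add_zero]
  rfl

end Main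

theorem stmt8 {V : Type*} [Fintype V] (G : SimpleGraph V) (c : V → ℝ)
    (hc : ∀ v, 0 ≤ c v) (T : Set V) (k : ℕ) (hk1 : 1 ≤ k) (hk2 : k ≤ T.ncard)
    (hex : ∃ H : G.Subgraph, H.coe.IsTree ∧ k ≤ (H.verts ∩ T).ncard) :
    sInf {x : ℝ | ∃ H : (Gext G T (Fintype.card V)).Subgraph, H.coe.IsTree ∧
        k * Fintype.card V + k ≤ H.verts.ncard ∧
        x = ∑ᶠ v ∈ H.verts, Sum.elim c (fun _ => (0 : ℝ)) v} =
    sInf {x : ℝ | ∃ H : G.Subgraph, H.coe.IsTree ∧ k ≤ (H.verts ∩ T).ncard ∧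
        x = ∑ᶠ v ∈ H.verts, c v} := by
  have hTne : T.Nonempty := Set.nonempty_of_ncard_ne_zero (by omega)
  have hV : Nonempty V := ⟨hTne.choose⟩
  have hn1 : 1 ≤ Fintype.card V := Fintype.card_pos
  have hsets : {x : ℝ | ∃ H : (Gext G T (Fintype.card V)).Subgraph, H.coe.IsTree ∧
        k * Fintype.card V + k ≤ H.verts.ncard ∧
        x = ∑ᶠ v ∈ H.verts, Sum.elim c (fun _ => (0 : ℝ)) v} =
      {x : ℝ | ∃ H : G.Subgraph, H.coe.IsTree ∧ k ≤ (H.verts ∩ T).ncard ∧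
        x = ∑ᶠ v ∈ H.verts, c v} := by
    ext x
    simp only [Set.mem_setOf_eq]
    constructor
    · rintro ⟨H', htree, hcard, rfl⟩
      have hkn : 1 ≤ k * Fintype.card V := Nat.one_le_iff_ne_zero.mpr
        (Nat.mul_ne_zero (by omega) (by omega))
      have hcard2 : 2 ≤ H'.verts.ncard := by omega
      refine ⟨Rest G T (Fintype.card V) H', rest_isTree htree hcard2, ?_, rest_cost c⟩
      have hle := rest_card htree.isConnected hcard2
      have hVle : (Rest G T (Fintype.card V) H').verts.ncard ≤ Fintype.card V := by
        calc (Rest G T (Fintype.card V) H').verts.ncard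
            ≤ (Set.univ : Set V).ncard :=
              Set.ncard_le_ncard (Set.subset_univ _) (Set.toFinite _)
          _ = Fintype.card V := by rw [Set.ncard_univ, Nat.card_eq_fintype_card]
      by_contra hlt
      push_neg at hlt
      have hmul : ((Rest G T (Fintype.card V) H').verts ∩ T).ncard * Fintype.card V +
          Fintype.card V ≤ k * Fintype.card V := by
        have := Nat.mul_le_mul_right (Fintype.card V) (Nat.succ_le_of_lt hlt)
        simpa [Nat.succ_mul] using this
      omega
    · rintro ⟨H, htree, hterm, rfl⟩
      obtain ⟨S, hS, hScard⟩ := Set.exists_subset_card_eq hterm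
      have hSH : S ⊆ H.verts := fun v hv => (hS hv).1
      have hST : S ⊆ T := fun v hv => (hS hv).2
      refine ⟨Hext G T (Fintype.card V) H S, hext_isTree hSH htree, ?_,
        (hext_cost hSH c).symm⟩
      rw [hext_verts_ncard hSH hST, hScard]
      have hkv : k ≤ H.verts.ncard := by
        rw [← hScard]
        exact Set.ncard_le_ncard hSH (Set.toFinite _)
      omega
  rw [hsets]
end

section
/- Let n ≥ 1 be an integer, let 0 < ε < 1 and P > 0 be reals, let S be a finite set with |S| ≤ n, and let π : S → ℝ≥0. If ∑_{u∈S} ⌈n·π(u)/(ε·P)⌉ ≥ ⌊n/ε⌋, then ∑_{u∈S} π(u) > (1 − 2ε)·P. -/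
theorem stmt11 {α : Type*} (n : ℕ) (hn : 1 ≤ n) (ε P : ℝ)
    (hε0 : 0 < ε) (hε1 : ε < 1) (hP : 0 < P)
    (S : Finset α) (hS : S.card ≤ n) (π : α → ℝ) (hπ : ∀ u ∈ S, 0 ≤ π u)
    (hsum : ⌊(n : ℝ) / ε⌋ ≤ ∑ u ∈ S, ⌈(n : ℝ) * π u / (ε * P)⌉) :
    (1 - 2 * ε) * P < ∑ u ∈ S, π u := by
  have hn1 : (1 : ℝ) ≤ (n : ℝ) := by exact_mod_cast hn
  rcases S.eq_empty_or_nonempty with rfl | hSe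
  · simp only [Finset.sum_empty] at hsum ⊢
    have : (1 : ℝ) ≤ (n : ℝ) / ε := by
      rw [le_div_iff₀ hε0]; nlinarith
    have hf : (1 : ℤ) ≤ ⌊(n : ℝ) / ε⌋ := by
      exact_mod_cast Int.le_floor.mpr (by simpa using this)
    omega
  · have h1 : (n:ℝ)/ε - 1 < (⌊(n:ℝ)/ε⌋ : ℝ) := Int.sub_one_lt_floor _
    have h2 : (∑ u ∈ S, (⌈(n:ℝ) * π u / (ε*P)⌉ : ℝ)) <
        ∑ u ∈ S, ((n:ℝ) * π u / (ε*P) + 1) :=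
      Finset.sum_lt_sum_of_nonempty hSe (fun u _ => Int.ceil_lt_add_one _)
    have h3 : ((⌊(n:ℝ)/ε⌋ : ℤ) : ℝ) ≤ ∑ u ∈ S, (⌈(n:ℝ)*π u/(ε*P)⌉ : ℝ) := by
      exact_mod_cast hsum
    have h4 : ∑ u ∈ S, ((n:ℝ) * π u / (ε*P) + 1) =
        (n:ℝ) / (ε*P) * (∑ u ∈ S, π u) + S.card := by
      rw [Finset.sum_add_distrib, Finset.mul_sum]
      simp [mul_div_assoc, div_mul_eq_mul_div, mul_comm]
    have hcard : (S.card : ℝ) ≤ (n : ℝ) := by exact_mod_cast hS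
    have hT : 0 ≤ ∑ u ∈ S, π u := Finset.sum_nonneg hπ
    have key : (n:ℝ)/ε - 1 < (n:ℝ) / (ε*P) * (∑ u ∈ S, π u) + (n:ℝ) := by
      calc (n:ℝ)/ε - 1 < (⌊(n:ℝ)/ε⌋ : ℝ) := h1
        _ ≤ ∑ u ∈ S, (⌈(n:ℝ)*π u/(ε*P)⌉ : ℝ) := h3
        _ < ∑ u ∈ S, ((n:ℝ) * π u / (ε*P) + 1) := h2
        _ = (n:ℝ) / (ε*P) * (∑ u ∈ S, π u) + S.card := h4
        _ ≤ _ := by linarith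
    have hεP : 0 < ε * P := mul_pos hε0 hP
    have key2 := mul_lt_mul_of_pos_right key hεP
    have e1 : (n:ℝ) / ε * (ε * P) = n * P := by field_simp
    have e2 : (n:ℝ) / (ε * P) * (∑ u ∈ S, π u) * (ε * P) = n * ∑ u ∈ S, π u := by
      field_simp
    rw [add_mul, e2, sub_mul, e1, one_mul] at key2
    nlinarith [mul_pos hε0 hP]
end
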